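/- arXiv:1507.06141 — 10 statements merged into one kernel-verified Lean document; each statement's English description precedes it below -/
import Mathlib

section
/- Let G be a signed graph (loop-less symmetric digraph with each arc signed, not necessarily symmetrically), and let v be a vertex. Let A(v) be the set of arcs uv entering v such that the arcs uv and vu have different signs, and suppose A(v) contains at least one positive arc. Let G' be obtained from G by flipping the sign of every arc in A(v). Then the number of fixed points of the conjunctive network on G is at most the number of fixed points of the conjunctive network on G'. Moreover, every fixed point x of the conjunctive network on G satisfies x_v = 0. -/
/-- `S` is a fixed set (characteristic set of a fixed point) of the conjunctive network
with positive arc relation `pos` and negative arc relation `neg`. -/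
def IsFixedSet {V : Type*} (pos neg : V → V → Prop) (S : Set V) : Prop :=
  ∀ v, v ∈ S ↔ (∀ u, pos u v → u ∈ S) ∧ (∀ u, neg u v → u ∉ S)

/-- Number of fixed points of the conjunctive network. -/
noncomputable def fixc {V : Type*} (pos neg : V → V → Prop) : ℕ :=
  Set.ncard {S : Set V | IsFixedSet pos neg S}

/-- Positive arcs of a signed graph: graph `G` with arc-signing `σ` (`true` = positive). -/
def posOf {V : Type*} (G : SimpleGraph V) (σ : V → V → Bool) : V → V → Prop :=
  fun u v => G.Adj u v ∧ σ u v = true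

/-- Negative arcs of a signed graph. -/
def negOf {V : Type*} (G : SimpleGraph V) (σ : V → V → Bool) : V → V → Prop :=
  fun u v => G.Adj u v ∧ σ u v = false

/-- Flipping the sign of every arc `uv` entering `v` whose sign differs from that of `vu`,
provided at least one such arc is positive, does not decrease the number of fixed
points; moreover every fixed point of the original network has `x_v = 0`. -/
theorem stmt3 {V : Type*} [Fintype V] [DecidableEq V] (G : SimpleGraph V)
    (σ : V → V → Bool) (v : V)
    (hA : ∃ u, G.Adj u v ∧ σ u v ≠ σ v u ∧ σ u v = true)
    (σ' : V → V → Bool)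
    (hσ' : ∀ a b, σ' a b = if b = v ∧ σ a b ≠ σ b a then !(σ a b) else σ a b) :
    fixc (posOf G σ) (negOf G σ) ≤ fixc (posOf G σ') (negOf G σ') ∧
    ∀ S : Set V, IsFixedSet (posOf G σ) (negOf G σ) S → v ∉ S := by
  classical
  obtain ⟨u, huv, hne, hpos⟩ := hA
  have hvu : σ v u = false := by
    cases h : σ v u
    · rfl
    · exact absurd (hpos.trans h.symm) hne
  -- every original fixed set omits v
  have part2 : ∀ S : Set V, IsFixedSet (posOf G σ) (negOf G σ) S → v ∉ S := by
    intro S hS hvS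
    have huS : u ∈ S := ((hS v).mp hvS).1 u ⟨huv, hpos⟩
    exact ((hS u).mp huS).2 v ⟨huv.symm, hvu⟩ hvS
  refine ⟨?_, part2⟩
  -- properties of σ'
  have hσ'v : ∀ a, σ' a v = σ v a := by
    intro a
    rw [hσ' a v]
    by_cases h : σ a v = σ v a
    · simp [h]
    · have hc : v = v ∧ σ a v ≠ σ v a := ⟨rfl, h⟩
      rw [if_pos hc]
      cases h1 : σ a v <;> cases h2 : σ v a <;> simp_all
  have hσ'w : ∀ a b, b ≠ v → σ' a b = σ a b := by
    intro a b hb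
    rw [hσ' a b]
    simp [hb]
  -- the new-fixedness condition at v
  set C : Set V → Prop := fun S =>
    (∀ a, G.Adj a v → σ v a = true → a ∈ S) ∧
      (∀ a, G.Adj a v → σ v a = false → a ∉ S) with hC
  set Φ : Set V → Set V := fun S => if C S then insert v S else S with hΦ
  have key : ∀ S : Set V, IsFixedSet (posOf G σ) (negOf G σ) S →
      IsFixedSet (posOf G σ') (negOf G σ') (Φ S) := by
    intro S hS
    have hvS : v ∉ S := part2 S hS
    by_cases hc : C S
    · -- in this case all out-arcs from v are negative and neighbors of v are out of S
      have claimA : ∀ w, G.Adj v w → σ v w = false := by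
        intro w hw
        by_contra h
        have hwt : σ v w = true := by cases h' : σ v w <;> simp_all
        have hwS : w ∈ S := hc.1 w hw.symm hwt
        exact hvS (((hS w).mp hwS).1 v ⟨hw, hwt⟩)
      have claimB : ∀ w, G.Adj v w → w ∉ S := fun w hw =>
        hc.2 w hw.symm (claimA w hw)
      have hΦS : Φ S = insert v S := if_pos hc
      rw [hΦS]
      intro w
      by_cases hw : w = v
      · subst hw
        constructor
        · intro _
          constructor
          · intro a ⟨ha, ha'⟩
            rw [hσ'v a] at ha'
            exact absurd (claimA a ha.symm) (by simp [ha'])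
          · intro a ⟨ha, _⟩ haS
            rcases haS with h | h
            · exact G.irrefl (h ▸ ha)
            · exact claimB a ha.symm h
        · intro _; exact Set.mem_insert _ _
      · have hmem : w ∈ insert v S ↔ w ∈ S := by simp [hw]
        rw [hmem]
        by_cases hadj : G.Adj v w
        · -- w is a neighbor of v : both sides false
          have hwS : w ∉ S := claimB w hadj
          refine ⟨fun h => absurd h hwS, fun ⟨_, hneg⟩ => absurd (Set.mem_insert v S)
            (hneg v ⟨hadj, by rw [hσ'w v w hw]; exact claimA w hadj⟩)⟩
        · -- w not a neighbor of v : condition unchanged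
          rw [hS w]
          constructor
          · intro ⟨h1, h2⟩
            constructor
            · intro a ⟨ha, ha'⟩
              have hav : a ≠ v := fun h => hadj (h ▸ ha)
              exact Set.mem_insert_of_mem _ (h1 a ⟨ha, by rwa [hσ'w a w hw] at ha'⟩)
            · intro a ⟨ha, ha'⟩ haS
              have hav : a ≠ v := fun h => hadj (h ▸ ha)
              rcases haS with h | h
              · exact hav h
              · exact h2 a ⟨ha, by rwa [hσ'w a w hw] at ha'⟩ h
          · intro ⟨h1, h2⟩
            constructor
            · intro a ⟨ha, ha'⟩
              have hav : a ≠ v := fun h => hadj (h ▸ ha)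
              have := h1 a ⟨ha, by rw [hσ'w a w hw]; exact ha'⟩
              rcases this with h | h
              · exact absurd h hav
              · exact h
            · intro a ⟨ha, ha'⟩ haS
              exact h2 a ⟨ha, by rw [hσ'w a w hw]; exact ha'⟩
                (Set.mem_insert_of_mem _ haS)
    · -- ¬ C S : S itself is a fixed set of σ'
      have hΦS : Φ S = S := if_neg hc
      rw [hΦS]
      intro w
      by_cases hw : w = v
      · subst hw
        simp only [hvS, false_iff]
        intro ⟨h1, h2⟩
        apply hc
        constructor
        · intro a ha ha'
          exact h1 a ⟨ha, by rw [hσ'v a]; exact ha'⟩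
        · intro a ha ha'
          exact h2 a ⟨ha, by rw [hσ'v a]; exact ha'⟩
      · rw [hS w]
        constructor
        · intro ⟨h1, h2⟩
          exact ⟨fun a ⟨ha, ha'⟩ => h1 a ⟨ha, by rwa [hσ'w a w hw] at ha'⟩,
            fun a ⟨ha, ha'⟩ => h2 a ⟨ha, by rwa [hσ'w a w hw] at ha'⟩⟩
        · intro ⟨h1, h2⟩
          exact ⟨fun a ⟨ha, ha'⟩ => h1 a ⟨ha, by rw [hσ'w a w hw]; exact ha'⟩,
            fun a ⟨ha, ha'⟩ => h2 a ⟨ha, by rw [hσ'w a w hw]; exact ha'⟩⟩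
  -- Φ is injective on fixed sets, since S = Φ S \ {v}
  have hdiff : ∀ S : Set V, IsFixedSet (posOf G σ) (negOf G σ) S → Φ S \ {v} = S := by
    intro S hS
    have hvS : v ∉ S := part2 S hS
    by_cases hc : C S
    · rw [hΦ]; simp only [if_pos hc]
      ext a; simp only [Set.mem_diff, Set.mem_insert_iff, Set.mem_singleton_iff]
      constructor
      · rintro ⟨h | h, h'⟩
        · exact absurd h h'
        · exact h
      · intro h; exact ⟨Or.inr h, fun he => hvS (he ▸ h)⟩
    · rw [hΦ]; simp only [if_neg hc]
      ext a; simp only [Set.mem_diff, Set.mem_singleton_iff]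
      exact ⟨fun h => h.1, fun h => ⟨h, fun he => hvS (he ▸ h)⟩⟩
  exact Set.ncard_le_ncard_of_injOn Φ (fun S hS => key S hS)
    (fun S₁ h₁ S₂ h₂ h => by
      have := hdiff S₁ h₁
      rw [h, hdiff S₂ h₂] at this
      exact this.symm)
    (Set.toFinite _)
end

section
/- For every signed graph G (a loop-less symmetric digraph with arbitrary arc-signing), there exists a simple signed graph G' on the same underlying graph (i.e., a symmetric signing σ' with σ'(uv) = σ'(vu) for all edges) such that the number of fixed points of the conjunctive network on G is at most the number of fixed points of the conjunctive network on G'. -/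
/-!
Replace `σ` by the symmetric signing `σ ∧ σᵀ`, in which an edge is positive iff both of its arcs
are. Call `v` an asymmetric head if some arc `uv` is positive while `vu` is negative. No fixed set
of `σ` contains an asymmetric head, and away from the asymmetric heads `σ` and `σ ∧ σᵀ` have the
same local functions. Hence a fixed set `S` of `σ` satisfies the fixed-point equations of
`σ ∧ σᵀ` outside the asymmetric heads, and a maximal set `T` of asymmetric heads such that
`S ∪ T` activates all of its members makes `S ∪ T` a fixed set of `σ ∧ σᵀ`; this uses only that
the new network is symmetric. Removing the asymmetric heads from `S ∪ T` recovers `S`, so the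
fixed sets of `σ` are images of fixed sets of `σ ∧ σᵀ`.
-/

/-- `Activates pos neg S v` says that the local function `f_v` takes the value `1` at the
indicator vector of `S`. -/
def Activates {V : Type*} (pos neg : V → V → Prop) (S : Set V) (v : V) : Prop :=
  (∀ u, pos u v → u ∈ S) ∧ (∀ u, neg u v → u ∉ S)

section Symmetric

variable {V : Type*} {pos neg : V → V → Prop} {A B : Set V} {v : V}

theorem activates_insert_of_activates (hneg : Std.Symm neg) (hirr : Std.Irrefl neg)
    (hA : ∀ a ∈ A, Activates pos neg A a) (hv : Activates pos neg A v) :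
    ∀ a ∈ insert v A, Activates pos neg (insert v A) a := by
  rintro a (rfl | ha)
  · exact ⟨fun u hu => Set.mem_insert_of_mem _ (hv.1 u hu),
      fun u hu => by rintro (rfl | huA); exacts [hirr.irrefl u hu, hv.2 u hu huA]⟩
  · exact ⟨fun u hu => Set.mem_insert_of_mem _ ((hA a ha).1 u hu),
      fun u hu => by
        rintro (rfl | huA)
        exacts [hv.2 a (hneg.symm u a hu) ha, (hA a ha).2 u hu huA]⟩

/-- Such a vertex `v` has no positive neighbours: a positive neighbour in `B` would force `v`
into `B`. -/
theorem activates_of_activates_superset (hpos : Std.Symm pos) (hAB : A ⊆ B)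
    (hB : ∀ b ∈ B, Activates pos neg B b) (hvB : v ∉ B) (hv : Activates pos neg B v) :
    Activates pos neg A v :=
  ⟨fun u hu => absurd ((hB u (hv.1 u hu)).1 v (hpos.symm u v hu)) hvB,
    fun u hu huA => hv.2 u hu (hAB huA)⟩

theorem exists_subset_isFixedSet_union (hpos : Std.Symm pos) (hneg : Std.Symm neg)
    (hirr : Std.Irrefl neg) {S M : Set V} (hM : M.Finite)
    (hS : ∀ v ∈ S, Activates pos neg S v)
    (hSc : ∀ v, v ∉ S → v ∉ M → ¬ Activates pos neg S v) :
    ∃ T ⊆ M, IsFixedSet pos neg (S ∪ T) := by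
  set 𝒯 : Set (Set V) := {T | T ⊆ M ∧ ∀ a ∈ S ∪ T, Activates pos neg (S ∪ T) a}
  have hempty : ∅ ∈ 𝒯 := ⟨Set.empty_subset M, by simpa only [Set.union_empty] using hS⟩
  obtain ⟨T, ⟨hTM, hT⟩, hTmax⟩ :=
    (hM.finite_subsets.subset fun T hT => hT.1).exists_maximalFor id 𝒯 ⟨∅, hempty⟩
  refine ⟨T, hTM, fun v => ⟨hT v, fun hv => ?_⟩⟩
  by_contra hvST
  by_cases hvM : v ∈ M
  · have hinsert : insert v T ∈ 𝒯 := by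
      refine ⟨Set.insert_subset hvM hTM, ?_⟩
      rw [Set.union_insert]
      exact activates_insert_of_activates hneg hirr hT hv
    exact hvST (Or.inr (hTmax hinsert (Set.subset_insert v T) (Set.mem_insert v T)))
  · exact hSc v (fun hvS => hvST (Or.inl hvS)) hvM
      (activates_of_activates_superset hpos Set.subset_union_left hT hvST hv)

end Symmetric

theorem fixc_le_fixc_of_subset_image {V : Type*} [Finite V] {pos neg pos' neg' : V → V → Prop}
    (f : Set V → Set V) (h : {S | IsFixedSet pos neg S} ⊆ f '' {S | IsFixedSet pos' neg' S}) :
    fixc pos neg ≤ fixc pos' neg' :=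
  (Set.ncard_le_ncard h (Set.toFinite _)).trans (Set.ncard_image_le (Set.toFinite _))

section SignedGraph

variable {V : Type*} (G : SimpleGraph V) (σ : V → V → Bool)

def andSigning : V → V → Bool := fun u v => σ u v && σ v u

def asymHeads : Set V := {v | ∃ u, G.Adj u v ∧ σ u v = true ∧ σ v u = false}

variable {G σ}

theorem posOf_symm (hσ : ∀ u v, σ u v = σ v u) : Std.Symm (posOf G σ) :=
  ⟨fun u v h => ⟨h.1.symm, (hσ v u).trans h.2⟩⟩

theorem negOf_symm (hσ : ∀ u v, σ u v = σ v u) : Std.Symm (negOf G σ) :=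
  ⟨fun u v h => ⟨h.1.symm, (hσ v u).trans h.2⟩⟩

theorem negOf_irrefl : Std.Irrefl (negOf G σ) :=
  ⟨fun v h => G.loopless.irrefl v h.1⟩

theorem andSigning_comm (u v : V) : andSigning σ u v = andSigning σ v u :=
  Bool.and_comm _ _

theorem disjoint_asymHeads_of_isFixedSet {S : Set V}
    (hS : IsFixedSet (posOf G σ) (negOf G σ) S) : Disjoint S (asymHeads G σ) := by
  refine Set.disjoint_left.2 fun v hv ⟨u, hadj, huv, hvu⟩ => ?_
  have hu : u ∈ S := ((hS v).1 hv).1 u ⟨hadj, huv⟩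
  exact ((hS u).1 hu).2 v ⟨hadj.symm, hvu⟩ hv

theorem activates_andSigning_iff {S : Set V} {v : V} (hv : v ∉ asymHeads G σ) :
    Activates (posOf G (andSigning σ)) (negOf G (andSigning σ)) S v ↔
      Activates (posOf G σ) (negOf G σ) S v := by
  have hsym : ∀ u, G.Adj u v → σ u v = true → σ v u = true := fun u hadj huv => by
    by_contra hvu
    exact hv ⟨u, hadj, huv, Bool.eq_false_iff.2 hvu⟩
  simp only [Activates, posOf, negOf, andSigning, Bool.and_eq_true, Bool.and_eq_false_iff]
  constructor
  · rintro ⟨hp, hn⟩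
    exact ⟨fun u ⟨hadj, huv⟩ => hp u ⟨hadj, huv, hsym u hadj huv⟩,
      fun u ⟨hadj, huv⟩ => hn u ⟨hadj, Or.inl huv⟩⟩
  · rintro ⟨hp, hn⟩
    refine ⟨fun u ⟨hadj, huv, _⟩ => hp u ⟨hadj, huv⟩, fun u ⟨hadj, hfalse⟩ => ?_⟩
    cases huv : σ u v
    · exact hn u ⟨hadj, huv⟩
    · simp [huv, hsym u hadj huv] at hfalse

theorem exists_isFixedSet_andSigning_diff_asymHeads [Finite V] {S : Set V}
    (hS : IsFixedSet (posOf G σ) (negOf G σ) S) :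
    ∃ S', IsFixedSet (posOf G (andSigning σ)) (negOf G (andSigning σ)) S' ∧
      S' \ asymHeads G σ = S := by
  have hSM := disjoint_asymHeads_of_isFixedSet hS
  obtain ⟨T, hTM, hST⟩ := exists_subset_isFixedSet_union (posOf_symm andSigning_comm)
    (negOf_symm andSigning_comm) negOf_irrefl (Set.toFinite (asymHeads G σ))
    (fun v hv => (activates_andSigning_iff (Set.disjoint_left.1 hSM hv)).2 ((hS v).1 hv))
    (fun v hvS hvM hv => hvS ((hS v).2 ((activates_andSigning_iff hvM).1 hv)))
  refine ⟨S ∪ T, hST, ?_⟩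
  rw [Set.union_sdiff_distrib, Set.sdiff_eq_empty.2 hTM, Set.union_empty, hSM.sdiff_eq_left]

end SignedGraph

/-- For every signed graph (graph `G` with arbitrary arc-signing `σ`) there is a
symmetric signing `σ'` with at least as many fixed points of the conjunctive network. -/
theorem stmt4 {V : Type*} [Fintype V] (G : SimpleGraph V) (σ : V → V → Bool) :
    ∃ σ' : V → V → Bool, (∀ u v, σ' u v = σ' v u) ∧
      fixc (posOf G σ) (negOf G σ) ≤ fixc (posOf G σ') (negOf G σ') :=
  ⟨andSigning σ, andSigning_comm, fixc_le_fixc_of_subset_image (· \ asymHeads G σ)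
    fun _ hS => exists_isFixedSet_andSigning_diff_asymHeads hS⟩
end

section
/- Let G be a simple signed graph on vertex set V and let U ⊆ V be such that G has no positive edge between U and V − U. If S is a fixed set of G[U] and S' is a fixed set of G − U − 𝒩_G(S), then S ∪ S' is a fixed set of G. Consequently fix(G[U]) ≤ fix(G). -/
/-- `S` is a fixed set of the conjunctive network of the simple signed graph
(positive edges `pos`, negative edges `neg`) induced on the vertex set `U`. -/
def FixedOn {V : Type*} (pos neg : V → V → Prop) (U S : Set V) : Prop :=
  S ⊆ U ∧ ∀ v ∈ U,
    (v ∈ S ↔ (∀ u ∈ U, pos u v → u ∈ S) ∧ (∀ u ∈ U, neg u v → u ∉ S))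

/-- `𝒩(S)`: the union of the neighborhood `N(S)` of `S` with all connected components
of the positive subgraph meeting `N(S)` (described via positive reachability). -/
def calN {V : Type*} (pos neg : V → V → Prop) (S : Set V) : Set V :=
  {v | ∃ w, (∃ u ∈ S, pos u w ∨ neg u w) ∧ Relation.ReflTransGen pos w v}

/-!
On `U` the set `S ∪ S'` agrees with `S`, and since no positive edge crosses the boundary of `U`,
the fixed-set condition of `G[U]` at a vertex of `U` is the one of `G`; the only new neighbours
are negative ones in `S'`, which lie outside `𝒩(S)` and so cannot be adjacent to `S`.
Symmetrically, on `W = V − U − 𝒩(S)` the set agrees with `S'`, and a vertex of `W` has no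
positive neighbour outside `W` and no neighbour at all in `S`. A vertex of `𝒩(S) − U` lies in
neither set and is blocked, either by a negative neighbour in `S` or by a positive neighbour in
`𝒩(S) − U`.

Every induced subgraph has a fixed set (a maximal union of positive components without internal
negative edge), so every fixed set `S` of `G[U]` extends to a fixed set `S ∪ S'` of `G`, and
`S` is recovered as `(S ∪ S') ∩ U`.
-/

section

variable {V : Type*} {pos neg : V → V → Prop}

lemma exists_fixedOn [Finite V] (hns : Symmetric neg) (hni : ∀ v, ¬ neg v v) (W : Set V) :
    ∃ S, FixedOn pos neg W S := by
  obtain ⟨S, -, ⟨hSW, hclosed, hindep⟩, hmax⟩ := Finite.exists_le_maximal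
    (p := fun S : Set V => S ⊆ W ∧ (∀ v ∈ S, ∀ u ∈ W, pos u v → u ∈ S) ∧
      ∀ v ∈ S, ∀ u ∈ S, ¬ neg u v)
    (a := ∅) (by simp)
  refine ⟨S, hSW, fun v hv => ⟨fun hvS => ?_, fun ⟨hp, hn⟩ => ?_⟩⟩
  · exact ⟨fun u hu => hclosed v hvS u hu, fun u _ huv huS => hindep v hvS u huS huv⟩
  · refine hmax ⟨Set.insert_subset hv hSW, ?_, ?_⟩ (Set.subset_insert v S) (Set.mem_insert v S)
    · rintro x (rfl | hx) u hu hux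
      exacts [Or.inr (hp u hu hux), Or.inr (hclosed x hx u hu hux)]
    · rintro x (rfl | hx) y (rfl | hy) hyx
      · exact hni _ hyx
      · exact hn y (hSW hy) hyx hy
      · exact hn x (hSW hx) (hns hyx) hx
      · exact hindep x hx y hy hyx

lemma FixedOn.mem_iff {U S T : Set V} {v : V} (hS : FixedOn pos neg U S) (hv : v ∈ U)
    (hT : ∀ u ∈ U, u ∈ T ↔ u ∈ S) (hpos : ∀ u, pos u v → u ∈ U)
    (hneg : v ∈ T → ∀ u, neg u v → u ∈ T → u ∈ U) :
    v ∈ T ↔ (∀ u, pos u v → u ∈ T) ∧ (∀ u, neg u v → u ∉ T) := by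
  refine ⟨fun hvT => ?_, fun ⟨hp, hn⟩ => ?_⟩
  · obtain ⟨hp, hn⟩ := (hS.2 v hv).1 ((hT v hv).1 hvT)
    refine ⟨fun u hu => (hT u (hpos u hu)).2 (hp u (hpos u hu) hu), fun u hu huT => ?_⟩
    have huU := hneg hvT u hu huT
    exact hn u huU hu ((hT u huU).1 huT)
  · refine (hT v hv).2 ((hS.2 v hv).2 ⟨fun u huU hu => (hT u huU).1 (hp u hu), ?_⟩)
    exact fun u huU hu huS => hn u hu ((hT u huU).2 huS)

lemma mem_calN_of_mem {S : Set V} {u v : V} (hu : u ∈ S) (h : pos u v ∨ neg u v) :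
    v ∈ calN pos neg S :=
  ⟨v, ⟨u, hu, h⟩, .refl⟩

lemma mem_calN_of_pos {S : Set V} {u v : V} (hu : u ∈ calN pos neg S) (h : pos u v) :
    v ∈ calN pos neg S :=
  let ⟨w, hw, hwu⟩ := hu
  ⟨w, hw, hwu.tail h⟩

lemma exists_blocker_of_mem_calN {U S : Set V} {v : V} (hU : ∀ u ∈ U, ∀ w, w ∉ U → ¬ pos u w)
    (hSU : S ⊆ U) (hv : v ∈ calN pos neg S) (hvU : v ∉ U) :
    (∃ u ∈ S, neg u v) ∨ ∃ u ∈ calN pos neg S \ U, pos u v := by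
  obtain ⟨w, ⟨s, hs, hsw⟩, hwv⟩ := hv
  rcases hwv.cases_tail with rfl | ⟨p, hwp, hpv⟩
  · exact .inl ⟨s, hs, hsw.resolve_left (hU s (hSU hs) _ hvU)⟩
  · exact .inr ⟨p, ⟨⟨w, ⟨s, hs, hsw⟩, hwp⟩, fun hp => hU p hp v hvU hpv⟩, hpv⟩

variable {U S S' : Set V}

lemma mem_union_iff_left_of_mem (hS' : FixedOn pos neg (U ∪ calN pos neg S)ᶜ S') {u : V}
    (hu : u ∈ U) : u ∈ S ∪ S' ↔ u ∈ S :=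
  or_iff_left fun h => hS'.1 h (.inl hu)

lemma mem_union_iff_right_of_mem (hS : FixedOn pos neg U S) {u : V}
    (hu : u ∈ (U ∪ calN pos neg S)ᶜ) : u ∈ S ∪ S' ↔ u ∈ S' :=
  or_iff_right fun h => hu (.inl (hS.1 h))

lemma isFixedSet_union (hps : Symmetric pos) (hns : Symmetric neg)
    (hU : ∀ u ∈ U, ∀ v, v ∉ U → ¬ pos u v) (hS : FixedOn pos neg U S)
    (hS' : FixedOn pos neg (U ∪ calN pos neg S)ᶜ S') : IsFixedSet pos neg (S ∪ S') := by
  intro v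
  by_cases hvU : v ∈ U
  · refine hS.mem_iff hvU (fun u => mem_union_iff_left_of_mem hS')
      (fun u hu => by_contra fun huU => hU v hvU u huU (hps hu)) ?_
    rintro hvT u hu (huS | huS')
    · exact hS.1 huS
    · have hvS := (mem_union_iff_left_of_mem hS' hvU).1 hvT
      exact absurd (.inr (mem_calN_of_mem hvS (.inr (hns hu)))) (hS'.1 huS')
  by_cases hvN : v ∈ calN pos neg S
  · refine iff_of_false (fun hvT => hvT.elim (fun h => hvU (hS.1 h)) (fun h => hS'.1 h (.inr hvN)))
      fun ⟨hp, hn⟩ => ?_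
    rcases exists_blocker_of_mem_calN hU hS.1 hvN hvU with ⟨u, huS, hu⟩ | ⟨u, ⟨huN, huU⟩, hu⟩
    · exact hn u hu (.inl huS)
    · exact (hp u hu).elim (fun h => huU (hS.1 h)) (fun h => hS'.1 h (.inr huN))
  have hvW : v ∈ (U ∪ calN pos neg S)ᶜ := fun h => h.elim hvU hvN
  refine hS'.mem_iff hvW (fun u => mem_union_iff_right_of_mem hS) ?_ ?_
  · rintro u hu (huU | huN)
    exacts [hU u huU v hvU hu, hvN (mem_calN_of_pos huN hu)]
  · rintro - u hu (huS | huS')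
    exacts [absurd (mem_calN_of_mem huS (.inr hu)) hvN, hS'.1 huS']

lemma union_inter_eq_left (hS : FixedOn pos neg U S)
    (hS' : FixedOn pos neg (U ∪ calN pos neg S)ᶜ S') : (S ∪ S') ∩ U = S :=
  Set.ext fun _ => ⟨fun ⟨h, hu⟩ => (mem_union_iff_left_of_mem hS' hu).1 h,
    fun h => ⟨.inl h, hS.1 h⟩⟩

end

theorem stmt5_general {V : Type*} [Fintype V] (pos neg : V → V → Prop)
    (hps : Symmetric pos) (hns : Symmetric neg)
    (hni : ∀ v, ¬ neg v v)
    (U : Set V) (hU : ∀ u ∈ U, ∀ v, v ∉ U → ¬ pos u v) :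
    (∀ S S' : Set V, FixedOn pos neg U S →
        FixedOn pos neg (U ∪ calN pos neg S)ᶜ S' →
        IsFixedSet pos neg (S ∪ S')) ∧
    Set.ncard {S : Set V | FixedOn pos neg U S} ≤
      Set.ncard {S : Set V | IsFixedSet pos neg S} := by
  refine ⟨fun S S' hS hS' => isFixedSet_union hps hns hU hS hS', ?_⟩
  have hsub : {S : Set V | FixedOn pos neg U S} ⊆
      (· ∩ U) '' {T : Set V | IsFixedSet pos neg T} := by
    intro S hS
    obtain ⟨S', hS'⟩ := exists_fixedOn (pos := pos) hns hni (U ∪ calN pos neg S)ᶜ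
    exact ⟨S ∪ S', isFixedSet_union hps hns hU hS hS', union_inter_eq_left hS hS'⟩
  exact (Set.ncard_le_ncard hsub).trans Set.ncard_image_le

/-- If there is no positive edge between `U` and its complement, then fixed sets of
`G[U]` and of `G − U − 𝒩_G(S)` combine to fixed sets of `G`; consequently
`fix(G[U]) ≤ fix(G)`. -/
theorem stmt5 {V : Type*} [Fintype V] (pos neg : V → V → Prop)
    (hps : Symmetric pos) (hns : Symmetric neg)
    (hpi : ∀ v, ¬ pos v v) (hni : ∀ v, ¬ neg v v)
    (hd : ∀ u v, pos u v → ¬ neg u v)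
    (U : Set V) (hU : ∀ u ∈ U, ∀ v, v ∉ U → ¬ pos u v) :
    (∀ S S' : Set V, FixedOn pos neg U S →
        FixedOn pos neg (U ∪ calN pos neg S)ᶜ S' →
        IsFixedSet pos neg (S ∪ S')) ∧
    Set.ncard {S : Set V | FixedOn pos neg U S} ≤
      Set.ncard {S : Set V | IsFixedSet pos neg S} :=
  stmt5_general pos neg hps hns hni U hU
end

section
/- Let G be a simple signed graph and C a non-trivial connected component of the positive subgraph G⁺. If the induced signed subgraph G[C] has no negative edge, then Fix(G) = Fix(G − C) ∪ { C ∪ S' | S' ∈ Fix(G − 𝒩_G(C)) }, and this union is disjoint; if G[C] has a negative edge, then Fix(G) = Fix(G − C). -/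
/-- Decomposition of `Fix(G)` along a non-trivial connected component `C` of the
positive subgraph: if `G[C]` has no negative edge then
`Fix(G) = Fix(G − C) ∪ {C ∪ S' | S' ∈ Fix(G − 𝒩(C))}` (a disjoint union),
and otherwise `Fix(G) = Fix(G − C)`. -/
theorem stmt7 {V : Type*} [Fintype V] (pos neg : V → V → Prop)
    (hps : Symmetric pos) (hns : Symmetric neg)
    (hpi : ∀ v, ¬ pos v v) (hni : ∀ v, ¬ neg v v)
    (hd : ∀ u v, pos u v → ¬ neg u v)
    (C : Set V)
    (hC : ∃ w ∈ C, ∀ v, v ∈ C ↔ Relation.ReflTransGen pos w v)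
    (hnt : ∃ u ∈ C, ∃ v ∈ C, u ≠ v) :
    ((∀ u ∈ C, ∀ v ∈ C, ¬ neg u v) →
      {S : Set V | IsFixedSet pos neg S} =
        {S | FixedOn pos neg Cᶜ S} ∪
          {T | ∃ S', FixedOn pos neg (calN pos neg C)ᶜ S' ∧ T = C ∪ S'} ∧
      Disjoint {S : Set V | FixedOn pos neg Cᶜ S}
        {T : Set V | ∃ S', FixedOn pos neg (calN pos neg C)ᶜ S' ∧ T = C ∪ S'}) ∧
    ((∃ u ∈ C, ∃ v ∈ C, neg u v) →
      {S : Set V | IsFixedSet pos neg S} = {S | FixedOn pos neg Cᶜ S}) := by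
  classical
  obtain ⟨w₀, hw₀C, hchar⟩ := hC
  obtain ⟨a, haC, b, hbC, hab⟩ := hnt
  -- closure of C under positive edges and positive paths
  have Cfwd : ∀ {u v}, u ∈ C → pos u v → v ∈ C := by
    intro u v hu h
    exact (hchar v).2 (((hchar u).1 hu).tail h)
  have Cpath : ∀ {u v}, u ∈ C → Relation.ReflTransGen pos u v → v ∈ C := by
    intro u v hu h
    induction h with
    | refl => exact hu
    | tail _ h ih => exact Cfwd ih h
  -- every vertex of C has a positive neighbor in C (non-triviality)
  have nbr : ∀ v ∈ C, ∃ u ∈ C, pos u v := by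
    intro v hv
    by_cases hvw : v = w₀
    · subst hvw
      obtain ⟨x, hxC, hxne⟩ : ∃ x ∈ C, x ≠ v := by
        rcases eq_or_ne a v with rfl | h
        · exact ⟨b, hbC, fun h => hab h.symm⟩
        · exact ⟨a, haC, h⟩
      have hp := (hchar x).1 hxC
      rcases Relation.ReflTransGen.cases_head hp with h | ⟨c, hc, _⟩
      · exact absurd h.symm hxne
      · exact ⟨c, Cfwd hv hc, hps hc⟩
    · have hp := (hchar v).1 hv
      rcases Relation.ReflTransGen.cases_tail hp with h | ⟨c, hc, hcv⟩
      · exact absurd h hvw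
      · exact ⟨c, (hchar c).2 hc, hcv⟩
  -- propagation of membership in a fixed set along positive paths
  have hSnb : ∀ {S : Set V}, IsFixedSet pos neg S → ∀ {u v}, v ∈ S → pos u v → u ∈ S := by
    intro S hS u v hv h
    exact ((hS _).1 hv).1 _ h
  have hSfwd : ∀ {S : Set V}, IsFixedSet pos neg S → ∀ {u v}, u ∈ S → pos u v → v ∈ S := by
    intro S hS u v hu h
    exact ((hS _).1 hu).1 _ (hps h)
  have hSpath : ∀ {S : Set V}, IsFixedSet pos neg S →
      ∀ {u v}, Relation.ReflTransGen pos u v → u ∈ S → v ∈ S := by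
    intro S hS u v h hu
    induction h with
    | refl => exact hu
    | tail _ h ih => exact hSfwd hS ih h
  have hSrev : ∀ {S : Set V}, IsFixedSet pos neg S →
      ∀ {u v}, Relation.ReflTransGen pos u v → v ∈ S → u ∈ S := by
    intro S hS u v h hv
    induction h with
    | refl => exact hv
    | tail _ h ih => exact ih (hSnb hS hv h)
  -- dichotomy: a fixed set contains C or avoids it
  have dich : ∀ {S : Set V}, IsFixedSet pos neg S → C ⊆ S ∨ (∀ v ∈ C, v ∉ S) := by
    intro S hS
    by_cases hw : w₀ ∈ S
    · exact Or.inl (fun v hv => hSpath hS ((hchar v).1 hv) hw)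
    · exact Or.inr (fun v hv hvS => hw (hSrev hS ((hchar v).1 hv) hvS))
  -- Fix(G−C) ⊆ Fix(G)
  have A : ∀ {S : Set V}, FixedOn pos neg Cᶜ S → IsFixedSet pos neg S := by
    intro S hS v
    by_cases hv : v ∈ C
    · obtain ⟨u, huC, hu⟩ := nbr v hv
      constructor
      · intro hvS; exact absurd hv (hS.1 hvS)
      · rintro ⟨h1, _⟩; exact absurd huC (hS.1 (h1 u hu))
    · have hiff := hS.2 v hv
      constructor
      · intro hvS
        have h := hiff.1 hvS
        refine ⟨fun u hp => ?_, fun u hn => ?_⟩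
        · by_cases huC : u ∈ C
          · exact absurd (Cfwd huC hp) hv
          · exact h.1 u huC hp
        · by_cases huC : u ∈ C
          · exact fun huS => (hS.1 huS) huC
          · exact h.2 u huC hn
      · rintro ⟨h1, h2⟩
        exact hiff.2 ⟨fun u _ hp => h1 u hp, fun u _ hn => h2 u hn⟩
  -- fixed sets avoiding C restrict to Fix(G−C)
  have B : ∀ {S : Set V}, IsFixedSet pos neg S → (∀ v ∈ C, v ∉ S) →
      FixedOn pos neg Cᶜ S := by
    intro S hS hdis
    refine ⟨fun x hx hxC => hdis x hxC hx, fun v hv => ?_⟩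
    constructor
    · intro hvS
      have h := (hS v).1 hvS
      exact ⟨fun u _ hp => h.1 u hp, fun u _ hn => h.2 u hn⟩
    · rintro ⟨h1, h2⟩
      refine (hS v).2 ⟨fun u hp => ?_, fun u hn => ?_⟩
      · by_cases huC : u ∈ C
        · exact absurd (Cfwd huC hp) hv
        · exact h1 u huC hp
      · by_cases huC : u ∈ C
        · exact hdis u huC
        · exact h2 u huC hn
  -- calN facts
  have NsubcalN : ∀ {u v}, u ∈ C → (pos u v ∨ neg u v) → v ∈ calN pos neg C := by
    intro u v hu h
    exact ⟨_, ⟨_, hu, h⟩, Relation.ReflTransGen.refl⟩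
  have CsubcalN : ∀ {v}, v ∈ C → v ∈ calN pos neg C := by
    intro v hv
    obtain ⟨u, huC, hu⟩ := nbr v hv
    exact NsubcalN huC (Or.inl hu)
  have calNfwd : ∀ {u v}, u ∈ calN pos neg C → pos u v → v ∈ calN pos neg C := by
    rintro u v ⟨w, hw, hpath⟩ h
    exact ⟨w, hw, hpath.tail h⟩
  refine ⟨fun hA => ⟨?_, ?_⟩, ?_⟩
  · -- no negative edge inside C : the equality
    ext S
    simp only [Set.mem_setOf_eq, Set.mem_union]
    constructor
    · intro hS
      rcases dich hS with hsub | hdis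
      · -- C ⊆ S
        have ScapN : ∀ v ∈ calN pos neg C, v ∈ S → v ∈ C := by
          rintro v ⟨w, ⟨u, huC, hu⟩, hpath⟩ hvS
          rcases hu with hp | hn
          · exact Cpath (Cfwd huC hp) hpath
          · have hwS : w ∉ S := fun hwS => ((hS w).1 hwS).2 u hn (hsub huC)
            exact absurd (hSrev hS hpath hvS) hwS
        refine Or.inr ⟨S ∩ (calN pos neg C)ᶜ, ⟨fun x hx => hx.2, ?_⟩, ?_⟩
        · intro v hv
          constructor
          · rintro ⟨hvS, -⟩
            have h := (hS v).1 hvS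
            exact ⟨fun u hu hp => ⟨h.1 u hp, hu⟩, fun u hu hn hu' => h.2 u hn hu'.1⟩
          · rintro ⟨h1, h2⟩
            refine ⟨(hS v).2 ⟨fun u hp => ?_, fun u hn => ?_⟩, hv⟩
            · by_cases hu : u ∈ calN pos neg C
              · exact absurd (calNfwd hu hp) hv
              · exact (h1 u hu hp).1
            · by_cases hu : u ∈ calN pos neg C
              · intro huS
                exact hv (NsubcalN (ScapN u hu huS) (Or.inr hn))
              · intro huS
                exact h2 u hu hn ⟨huS, hu⟩
        · ext x
          simp only [Set.mem_union, Set.mem_inter_iff, Set.mem_compl_iff]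
          constructor
          · intro hx
            by_cases hN : x ∈ calN pos neg C
            · exact Or.inl (ScapN x hN hx)
            · exact Or.inr ⟨hx, hN⟩
          · rintro (h | h)
            · exact hsub h
            · exact h.1
      · exact Or.inl (B hS hdis)
    · rintro (h | ⟨S', hS', rfl⟩)
      · exact A h
      · have hS'sub : S' ⊆ (calN pos neg C)ᶜ := hS'.1
        intro v
        by_cases hvC : v ∈ C
        · refine iff_of_true (Or.inl hvC)
            ⟨fun u hp => Or.inl (Cfwd hvC (hps hp)), fun u hn hu => ?_⟩
          rcases hu with hu | hu
          · exact hA u hu v hvC hn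
          · exact hS'sub hu (NsubcalN hvC (Or.inr (hns hn)))
        · by_cases hvN : v ∈ calN pos neg C
          · obtain ⟨w, ⟨u, huC, hu⟩, hpath⟩ := hvN
            have hun : neg u w := by
              rcases hu with hp | hn
              · exact absurd (Cpath (Cfwd huC hp) hpath) hvC
              · exact hn
            have key : ∀ x, Relation.ReflTransGen pos w x →
                x ∉ C ∧ ¬ ((∀ y, pos y x → y ∈ C ∪ S') ∧
                  (∀ y, neg y x → y ∉ C ∪ S')) := by
              intro x hx
              induction hx with
              | refl =>
                exact ⟨fun h => hA u huC w h hun, fun h => h.2 u hun (Or.inl huC)⟩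
              | @tail p q hp hpq ih =>
                have hpN : p ∈ calN pos neg C := ⟨w, ⟨u, huC, Or.inr hun⟩, hp⟩
                have hpS : p ∉ C ∪ S' := by
                  rintro (h | h)
                  · exact ih.1 h
                  · exact hS'sub h hpN
                exact ⟨fun h => ih.1 (Cfwd h (hps hpq)), fun h => hpS (h.1 p hpq)⟩
            have hv := key v hpath
            refine iff_of_false ?_ hv.2
            rintro (h | h)
            · exact hv.1 h
            · exact hS'sub h ⟨w, ⟨u, huC, Or.inr hun⟩, hpath⟩
          · have hv' := hS'.2 v hvN
            have memiff : v ∈ C ∪ S' ↔ v ∈ S' := by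
              constructor
              · rintro (h | h)
                · exact absurd h hvC
                · exact h
              · exact Or.inr
            rw [memiff, hv']
            constructor
            · rintro ⟨h1, h2⟩
              refine ⟨fun y hp => ?_, fun y hn hy => ?_⟩
              · by_cases hyN : y ∈ calN pos neg C
                · exact absurd (calNfwd hyN hp) hvN
                · exact Or.inr (h1 y hyN hp)
              · rcases hy with hy | hy
                · exact hvN (NsubcalN hy (Or.inr hn))
                · exact h2 y (hS'sub hy) hn hy
            · rintro ⟨h1, h2⟩
              refine ⟨fun y hy hp => ?_, fun y hy hn hy' => ?_⟩
              · rcases h1 y hp with h | h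
                · exact absurd (CsubcalN h) hy
                · exact h
              · exact h2 y hn (Or.inr hy')
  · -- disjointness
    rw [Set.disjoint_left]
    rintro S hS1 ⟨S', _, rfl⟩
    exact hS1.1 (Or.inl haC) haC
  · -- negative edge inside C
    rintro ⟨u, huC, v, hvC, hn⟩
    ext S
    simp only [Set.mem_setOf_eq]
    constructor
    · intro hS
      rcases dich hS with hsub | hdis
      · exact absurd (hsub huC) (((hS v).1 (hsub hvC)).2 u hn)
      · exact B hS hdis
    · exact A
end

section
/- Every simple signed graph G has at least one fixed set, i.e., fix(G) ≥ 1. -/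
/-!
A maximal set that is closed under positive in-neighbours and contains no negative edge is a
fixed set: if `v ∉ S` had all its positive in-neighbours in `S` and no negative neighbour in `S`,
then `insert v S` would again be such a set, since the negative edges are symmetric and loopless.
Over a finite vertex set such a maximal set exists, starting from `∅`.
-/

section

variable {V : Type*} {pos neg : V → V → Prop} {S : Set V} {v : V}

structure IsClosedIndependent (pos neg : V → V → Prop) (S : Set V) : Prop where
  pos_closed : ∀ ⦃u w⦄, pos u w → w ∈ S → u ∈ S
  neg_free : ∀ ⦃u w⦄, neg u w → u ∈ S → w ∉ S

theorem isClosedIndependent_empty : IsClosedIndependent pos neg ∅ :=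
  ⟨fun _ _ _ hw ↦ hw.elim, fun _ _ _ hu ↦ hu.elim⟩

theorem IsClosedIndependent.insert (hS : IsClosedIndependent pos neg S) (hns : Symmetric neg)
    (hv : ¬ neg v v) (hpos : ∀ u, pos u v → u ∈ S) (hneg : ∀ u, neg u v → u ∉ S) :
    IsClosedIndependent pos neg (insert v S) where
  pos_closed u w huw hw := by
    rcases hw with rfl | hw
    · exact Or.inr (hpos u huw)
    · exact Or.inr (hS.pos_closed huw hw)
  neg_free u w huw hu hw := by
    rcases hu with rfl | hu <;> rcases hw with rfl | hw
    · exact hv huw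
    · exact hneg w (hns huw) hw
    · exact hneg u huw hu
    · exact hS.neg_free huw hu hw

theorem Maximal.isFixedSet (hS : Maximal (IsClosedIndependent pos neg) S)
    (hns : Symmetric neg) (hni : ∀ v, ¬ neg v v) : IsFixedSet pos neg S := by
  intro v
  constructor
  · intro hv
    exact ⟨fun u huv ↦ hS.1.pos_closed huv hv, fun u huv hu ↦ hS.1.neg_free huv hu hv⟩
  · rintro ⟨hpos, hneg⟩
    exact hS.mem_of_prop_insert (hS.1.insert hns (hni v) hpos hneg)

theorem exists_isFixedSet [Finite V] (hns : Symmetric neg) (hni : ∀ v, ¬ neg v v) :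
    ∃ S, IsFixedSet pos neg S := by
  obtain ⟨S, hS⟩ := (Set.toFinite {S : Set V | IsClosedIndependent pos neg S}).exists_maximal
    ⟨∅, isClosedIndependent_empty⟩
  exact ⟨S, Maximal.isFixedSet hS hns hni⟩

end

theorem stmt8_general {V : Type*} [Fintype V] (pos neg : V → V → Prop)
    (hns : Symmetric neg)
    (hni : ∀ v, ¬ neg v v) :
    1 ≤ fixc pos neg :=
  (Set.ncard_pos (Set.toFinite _)).2 (exists_isFixedSet hns hni)

/-- Every simple signed graph has at least one fixed set: `fix(G) ≥ 1`. -/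
theorem stmt8 {V : Type*} [Fintype V] (pos neg : V → V → Prop)
    (hps : Symmetric pos) (hns : Symmetric neg)
    (hpi : ∀ v, ¬ pos v v) (hni : ∀ v, ¬ neg v v)
    (hd : ∀ u v, pos u v → ¬ neg u v) :
    1 ≤ fixc pos neg :=
  stmt8_general pos neg hns hni
end

section
/- For every simple signed graph G there exists a simple signed graph G' on the same underlying graph, obtained by changing some positive edges into negative edges, such that fix(G) ≤ fix(G') and the set of positive edges of G' forms a matching. -/
/-!
A fixed set of a conjunctive network with symmetric positive edges is a union of positive
components which is independent for the negative edges and dominates (negatively) every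
positively isolated vertex outside it. Keep one positive edge in every positive component and
make the other positive edges negative. A fixed set `S` of the old network is remembered, on the
new one, by its trace on the kept edges together with its positively isolated vertices; this
partial configuration extends, by adding vertices greedily, to a fixed set `T` of the new network.
Since every component meets a kept edge, `T` determines `S`, so `S ↦ T` is injective.
-/

section

open Relation

variable {V : Type*}

def IsClosedIndep (p n : V → V → Prop) (S : Set V) : Prop :=
  (∀ u v, p u v → (u ∈ S ↔ v ∈ S)) ∧ ∀ u v, n u v → ¬(u ∈ S ∧ v ∈ S)

theorem isFixedSet_iff {p n : V → V → Prop} (hp : Symmetric p) {S : Set V} :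
    IsFixedSet p n S ↔
      IsClosedIndep p n S ∧ ∀ v ∉ S, (∃ u, p u v) ∨ ∃ u, n u v ∧ u ∈ S := by
  constructor
  · intro h
    refine ⟨⟨fun u v huv => ⟨fun hu => ((h u).1 hu).1 v (hp huv), fun hv => ((h v).1 hv).1 u huv⟩,
      fun u v huv ⟨hu, hv⟩ => ((h v).1 hv).2 u huv hu⟩, fun v hv => ?_⟩
    by_contra! hc
    exact hv ((h v).2 ⟨fun u hu => absurd hu (hc.1 u), hc.2⟩)
  · rintro ⟨⟨hclosed, hindep⟩, hdom⟩ v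
    refine ⟨fun hv => ⟨fun u hu => (hclosed u v hu).2 hv, fun u hu huS => hindep u v hu ⟨huS, hv⟩⟩,
      fun ⟨hpv, hnv⟩ => ?_⟩
    by_contra hv
    rcases hdom v hv with ⟨u, hu⟩ | ⟨u, hu, huS⟩
    · exact hv ((hclosed u v hu).1 (hpv u hu))
    · exact hnv u hu huS

theorem mem_iff_of_reflTransGen {p : V → V → Prop} {S : Set V}
    (hS : ∀ u v, p u v → (u ∈ S ↔ v ∈ S)) {u v : V} (h : ReflTransGen p u v) :
    u ∈ S ↔ v ∈ S := by
  induction h with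
  | refl => rfl
  | tail _ hbc ih => exact ih.trans (hS _ _ hbc)

/-- A maximal closed independent set containing `T₀` and agreeing with it
on `M` is fixed, because a vertex it misses could be added to it. -/
theorem exists_isFixedSet_superset [Finite V] {p n : V → V → Prop} (hp : Symmetric p)
    (hn : Symmetric n) (hn_irrefl : ∀ v, ¬ n v v) {T₀ M : Set V} (hT₀ : IsClosedIndep p n T₀)
    (hM : ∀ v ∈ M, ∃ u, p u v) :
    ∃ T, IsFixedSet p n T ∧ T₀ ⊆ T ∧ T ∩ M ⊆ T₀ := by
  obtain ⟨T, ⟨⟨hclosed, hindep⟩, hT₀T, hTM⟩, hmax⟩ :=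
    (Set.toFinite {T | IsClosedIndep p n T ∧ T₀ ⊆ T ∧ T ∩ M ⊆ T₀}).exists_maximal
      ⟨T₀, hT₀, subset_rfl, Set.inter_subset_left⟩
  refine ⟨T, (isFixedSet_iff hp).2 ⟨⟨hclosed, hindep⟩, fun v hv => ?_⟩, hT₀T, hTM⟩
  by_contra! hfree
  obtain ⟨hv_iso, hv_indep⟩ := hfree
  have hvM : v ∉ M := fun h => (hM v h).elim hv_iso
  have hinsert : IsClosedIndep p n (insert v T) ∧ T₀ ⊆ insert v T ∧ insert v T ∩ M ⊆ T₀ := by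
    refine ⟨⟨fun a b hab => ?_, ?_⟩, hT₀T.trans (Set.subset_insert v T), ?_⟩
    · have ha : a ≠ v := fun h => hv_iso b (hp (h ▸ hab))
      have hb : b ≠ v := fun h => hv_iso a (h ▸ hab)
      simpa only [Set.mem_insert_iff, ha, hb, false_or] using hclosed a b hab
    · rintro a b hab ⟨rfl | ha, rfl | hb⟩
      · exact hn_irrefl _ hab
      · exact hv_indep _ (hn hab) hb
      · exact hv_indep _ hab ha
      · exact hindep a b hab ⟨ha, hb⟩
    · rw [Set.insert_inter_of_notMem hvM]
      exact hTM
  exact hv (hmax hinsert (Set.subset_insert v T) (Set.mem_insert v T))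

/-- The defining predicate depends only on the positive component of `u`, so the choice is
constant on components. -/
noncomputable def componentEdge (pos : V → V → Prop) (u : V) : Set V :=
  Classical.epsilon fun s => ∃ a b, pos a b ∧ ReflTransGen pos a u ∧ s = {a, b}

theorem componentEdge_eq_of_adj {pos : V → V → Prop} (hps : Symmetric pos) {u v : V}
    (h : pos u v) : componentEdge pos u = componentEdge pos v := by
  have hrel : ∀ a, ReflTransGen pos a u ↔ ReflTransGen pos a v :=
    fun a => ⟨fun ha => ha.tail h, fun ha => ha.tail (hps h)⟩
  simp only [componentEdge, hrel]

theorem componentEdge_eq_of_reflTransGen {pos : V → V → Prop} (hps : Symmetric pos) {u v : V}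
    (h : ReflTransGen pos u v) : componentEdge pos u = componentEdge pos v := by
  induction h with
  | refl => rfl
  | tail _ hbc ih => exact ih.trans (componentEdge_eq_of_adj hps hbc)

theorem exists_componentEdge_eq {pos : V → V → Prop} {u w : V} (h : pos w u) :
    ∃ a b, pos a b ∧ ReflTransGen pos a u ∧ componentEdge pos u = {a, b} := by
  have hex : ∃ s : Set V, ∃ a b, pos a b ∧ ReflTransGen pos a u ∧ s = {a, b} :=
    ⟨_, w, u, h, .single h, rfl⟩
  exact Classical.epsilon_spec hex

def keptEdge (pos : V → V → Prop) (u v : V) : Prop :=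
  pos u v ∧ u ∈ componentEdge pos u ∧ v ∈ componentEdge pos u

theorem keptEdge_symm {pos : V → V → Prop} (hps : Symmetric pos) : Symmetric (keptEdge pos) := by
  rintro u v ⟨huv, hu, hv⟩
  rw [componentEdge_eq_of_adj hps huv] at hu hv
  exact ⟨hps huv, hv, hu⟩

theorem keptEdge_unique {pos : V → V → Prop} (hps : Symmetric pos) (hpi : ∀ v, ¬ pos v v)
    {u v w : V} (hv : keptEdge pos u v) (hw : keptEdge pos u w) : v = w := by
  obtain ⟨a, b, -, -, hab⟩ := exists_componentEdge_eq (hps hv.1)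
  have huv : u ≠ v := fun h => hpi u (h ▸ hv.1)
  have huw : u ≠ w := fun h => hpi u (h ▸ hw.1)
  obtain ⟨-, hu, hv⟩ := hv
  obtain ⟨-, -, hw⟩ := hw
  simp only [hab, Set.mem_insert_iff, Set.mem_singleton_iff] at hu hv hw
  grind

theorem keptEdge_of_adj {pos : V → V → Prop} (hps : Symmetric pos) {u v : V} (huv : pos u v)
    (hu : ∃ w, keptEdge pos u w) (hv : ∃ w, keptEdge pos v w) : keptEdge pos u v := by
  obtain ⟨_, _, hu, -⟩ := hu
  obtain ⟨_, _, hv, -⟩ := hv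
  exact ⟨huv, hu, (componentEdge_eq_of_adj hps huv).symm ▸ hv⟩

theorem exists_keptEdge_reflTransGen {pos : V → V → Prop} (hps : Symmetric pos) {v w : V}
    (h : pos w v) : ∃ a, (∃ b, keptEdge pos a b) ∧ ReflTransGen pos a v := by
  obtain ⟨a, b, hab, hav, he⟩ := exists_componentEdge_eq h
  have hea : componentEdge pos a = {a, b} := (componentEdge_eq_of_reflTransGen hps hav).trans he
  exact ⟨a, ⟨b, hab, by simp [hea], by simp [hea]⟩, hav⟩

section Demotion

variable {pos neg pos' : V → V → Prop}

theorem mem_of_inter_eq_of_reflTransGen {S₁ S₂ M : Set V} (hS₁ : ∀ u v, pos u v → (u ∈ S₁ ↔ v ∈ S₁))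
    (hS₂ : ∀ u v, pos u v → (u ∈ S₂ ↔ v ∈ S₂))
    (hM : ∀ v, (∃ w, pos w v) → ∃ a ∈ M, ReflTransGen pos a v) (hSM : S₁ ∩ M = S₂ ∩ M)
    {v : V} (hv : ∃ w, pos w v) (hvS : v ∈ S₁) : v ∈ S₂ := by
  obtain ⟨a, haM, hav⟩ := hM v hv
  have ha : a ∈ S₂ ∩ M := hSM ▸ ⟨(mem_iff_of_reflTransGen hS₁ hav).2 hvS, haM⟩
  exact (mem_iff_of_reflTransGen hS₂ hav).1 ha.1

theorem IsFixedSet.subset_of_inter_eq (hps : Symmetric pos) {S₁ S₂ M T : Set V}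
    (hS₁ : IsFixedSet pos neg S₁) (hS₂ : IsFixedSet pos neg S₂)
    (hM : ∀ v, (∃ w, pos w v) → ∃ a ∈ M, ReflTransGen pos a v) (hSM : S₁ ∩ M = S₂ ∩ M)
    (hT : ∀ u v, neg u v → ¬(u ∈ T ∧ v ∈ T))
    (hT₁ : ∀ v ∈ S₁, (¬∃ w, pos w v) → v ∈ T) (hT₂ : ∀ v ∈ S₂, (¬∃ w, pos w v) → v ∈ T) :
    S₁ ⊆ S₂ := by
  obtain ⟨⟨hclosed₁, hindep₁⟩, -⟩ := (isFixedSet_iff hps).1 hS₁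
  obtain ⟨⟨hclosed₂, -⟩, hdom₂⟩ := (isFixedSet_iff hps).1 hS₂
  intro v hv
  by_cases hv_iso : ∃ w, pos w v
  · exact mem_of_inter_eq_of_reflTransGen hclosed₁ hclosed₂ hM hSM hv_iso hv
  by_contra hv₂
  rcases hdom₂ v hv₂ with hpos | ⟨x, hxv, hx⟩
  · exact hv_iso hpos
  by_cases hx_iso : ∃ w, pos w x
  · have hx₁ := mem_of_inter_eq_of_reflTransGen hclosed₂ hclosed₁ hM hSM.symm hx_iso hx
    exact hindep₁ x v hxv ⟨hx₁, hv⟩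
  · exact hT x v hxv ⟨hT₂ x hx hx_iso, hT₁ v hv hv_iso⟩

variable [Finite V] (hps : Symmetric pos) (hns : Symmetric neg) (hpi : ∀ v, ¬ pos v v)
  (hni : ∀ v, ¬ neg v v) (hsub : ∀ u v, pos' u v → pos u v) (hsymm : Symmetric pos')
  (hkept : ∀ u v, pos u v → (∃ w, pos' u w) → (∃ w, pos' v w) → pos' u v)
include hps hns hpi hni hsub hsymm hkept

theorem IsFixedSet.exists_isFixedSet_demote {S : Set V} (hS : IsFixedSet pos neg S) :
    ∃ T, IsFixedSet pos' (fun u v => neg u v ∨ (pos u v ∧ ¬ pos' u v)) T ∧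
      (∀ v ∈ S, (¬∃ w, pos w v) → v ∈ T) ∧ T ∩ {v | ∃ w, pos' v w} = S ∩ {v | ∃ w, pos' v w} := by
  obtain ⟨⟨hclosed, hindep⟩, -⟩ := (isFixedSet_iff hps).1 hS
  set M := {v | ∃ w, pos' v w}
  set T₀ := {v ∈ S | v ∈ M ∨ ¬∃ w, pos w v}
  have hT₀ : IsClosedIndep pos' (fun u v => neg u v ∨ (pos u v ∧ ¬ pos' u v)) T₀ := by
    refine ⟨fun u v huv => ?_, ?_⟩
    · have hu : u ∈ M := ⟨v, huv⟩
      have hv : v ∈ M := ⟨u, hsymm huv⟩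
      simp only [T₀, Set.mem_setOf_eq, hu, hv, true_or, and_true, hclosed u v (hsub u v huv)]
    · rintro u v (huv | ⟨huv, hkept_uv⟩) ⟨⟨hu, hu'⟩, hv, hv'⟩
      · exact hindep u v huv ⟨hu, hv⟩
      · have hu_kept : u ∈ M := hu'.resolve_right fun h => h ⟨v, hps huv⟩
        have hv_kept : v ∈ M := hv'.resolve_right fun h => h ⟨u, huv⟩
        exact hkept_uv (hkept u v huv hu_kept hv_kept)
  have hneg'_symm : Symmetric fun u v => neg u v ∨ (pos u v ∧ ¬ pos' u v) := by
    rintro u v (h | ⟨h, h'⟩)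
    · exact .inl (hns h)
    · exact .inr ⟨hps h, fun h'' => h' (hsymm h'')⟩
  obtain ⟨T, hT, hT₀T, hTM⟩ := exists_isFixedSet_superset hsymm hneg'_symm
    (fun v h => h.elim (hni v) fun h => hpi v h.1) hT₀
    fun v (hv : ∃ w, pos' v w) => hv.imp fun _ h => hsymm h
  refine ⟨T, hT, fun v hv hv_iso => hT₀T ⟨hv, .inr hv_iso⟩, ?_⟩
  exact Set.Subset.antisymm (fun v hv => ⟨(hTM hv).1, hv.2⟩)
    (fun v hv => ⟨hT₀T ⟨hv.1, .inl hv.2⟩, hv.2⟩)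

theorem fixc_le_fixc_demote
    (hcover : ∀ v, (∃ w, pos w v) → ∃ a, (∃ b, pos' a b) ∧ ReflTransGen pos a v) :
    fixc pos neg ≤ fixc pos' (fun u v => neg u v ∨ (pos u v ∧ ¬ pos' u v)) := by
  have hex : ∀ S, ∃ T, IsFixedSet pos neg S →
      IsFixedSet pos' (fun u v => neg u v ∨ (pos u v ∧ ¬ pos' u v)) T ∧
      (∀ v ∈ S, (¬∃ w, pos w v) → v ∈ T) ∧
      T ∩ {v | ∃ w, pos' v w} = S ∩ {v | ∃ w, pos' v w} := fun S => by
    by_cases hS : IsFixedSet pos neg S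
    · obtain ⟨T, hT⟩ := hS.exists_isFixedSet_demote hps hns hpi hni hsub hsymm hkept
      exact ⟨T, fun _ => hT⟩
    · exact ⟨∅, fun h => absurd h hS⟩
  choose f hf using hex
  refine Set.ncard_le_ncard_of_injOn f (fun S hS => (hf S hS).1) fun S₁ hS₁ S₂ hS₂ heq => ?_
  obtain ⟨hT, hT₁, hM₁⟩ := hf S₁ hS₁
  obtain ⟨-, hT₂, hM₂⟩ := hf S₂ hS₂
  rw [heq] at hT hT₁ hM₁
  have hindep := ((isFixedSet_iff hsymm).1 hT).1.2
  have hM : ∀ v, (∃ w, pos w v) → ∃ a ∈ {v | ∃ w, pos' v w}, ReflTransGen pos a v := hcover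
  have hSM := hM₁.symm.trans hM₂
  exact Set.Subset.antisymm
    (hS₁.subset_of_inter_eq hps hS₂ hM hSM (fun u v h => hindep u v (.inl h)) hT₁ hT₂)
    (hS₂.subset_of_inter_eq hps hS₁ hM hSM.symm (fun u v h => hindep u v (.inl h)) hT₂ hT₁)

end Demotion

end

theorem stmt9_general {V : Type*} [Fintype V] (pos neg : V → V → Prop)
    (hps : Symmetric pos) (hns : Symmetric neg)
    (hpi : ∀ v, ¬ pos v v) (hni : ∀ v, ¬ neg v v) :
    ∃ pos' : V → V → Prop, (∀ u v, pos' u v → pos u v) ∧ Symmetric pos' ∧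
      (∀ u v w, pos' u v → pos' u w → v = w) ∧
      fixc pos neg ≤ fixc pos' (fun u v => neg u v ∨ (pos u v ∧ ¬ pos' u v)) :=
  ⟨keptEdge pos, fun _ _ h => h.1, keptEdge_symm hps,
    fun _ _ _ => keptEdge_unique hps hpi,
    fixc_le_fixc_demote hps hns hpi hni (fun _ _ h => h.1) (keptEdge_symm hps)
      (fun _ _ => keptEdge_of_adj hps) (fun _ ⟨_, h⟩ => exists_keptEdge_reflTransGen hps h)⟩

/-- For every simple signed graph `(pos, neg)` there is a simple signed graph on the
same underlying graph, obtained by turning some positive edges negative, with at least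
as many fixed points and whose positive edges form a matching. -/
theorem stmt9 {V : Type*} [Fintype V] (pos neg : V → V → Prop)
    (hps : Symmetric pos) (hns : Symmetric neg)
    (hpi : ∀ v, ¬ pos v v) (hni : ∀ v, ¬ neg v v)
    (hd : ∀ u v, pos u v → ¬ neg u v) :
    ∃ pos' : V → V → Prop, (∀ u v, pos' u v → pos u v) ∧ Symmetric pos' ∧
      (∀ u v w, pos' u v → pos' u w → v = w) ∧
      fixc pos neg ≤ fixc pos' (fun u v => neg u v ∨ (pos u v ∧ ¬ pos' u v)) :=
  stmt9_general pos neg hps hns hpi hni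
end

section
/- Let G be a simple signed graph whose unique positive edge is ab, with every vertex of G in N(a) ∪ N(b). Let G' be obtained from G by making ab negative. Then fix(G) ≤ fix(G') + 1, and if G has no induced 4-cycle containing the edge ab, then fix(G) ≤ fix(G'). -/
/-- `{a,b,u,v}` induces a 4-cycle `a-b-u-v-a` in the graph with adjacency `adj`. -/
def IsInducedC4 {V : Type*} (adj : V → V → Prop) (a b u v : V) : Prop :=
  a ≠ b ∧ a ≠ u ∧ a ≠ v ∧ b ≠ u ∧ b ≠ v ∧ u ≠ v ∧
  adj a b ∧ adj b u ∧ adj u v ∧ adj v a ∧ ¬ adj a u ∧ ¬ adj b v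

/-!
The fixed sets of `G'` are its kernels (independent dominating sets). The fixed sets of `G` are
`{a, b}` and the independent sets `S` of the negative graph that avoid `a` and `b` and dominate
every other vertex. Each such `S` extends to a kernel of `G'` by adding whichever of `a`, `b` is
undominated (preferring `a`), and `S` is recovered by removing `a` and `b`; this gives the bound
with `+ 1`. Without induced 4-cycles through `ab` there is one more kernel of `G'`. If some
`v ∈ N(a) \ N[b]` exists, add `a` to an independent set that dominates the vertices outside
`N[a] ∪ N(v)`: this is a kernel because every vertex outside `N[a]` lies in `N(b)`, and one in
`N(v)` would close the 4-cycle `a b w v`; it is not an extension since only `a` dominates `v`.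
Otherwise `N(a) ⊆ N[b]`, and `{b}` is a kernel.
-/

open Set

section Kernel

variable {V : Type*}

def IsKernel (r : V → V → Prop) (S : Set V) : Prop :=
  S.Pairwise (fun u v => ¬ r u v) ∧ ∀ v ∉ S, ∃ u ∈ S, r u v

theorem IsKernel.isFixedSet {r : V → V → Prop} (hr : ∀ v, ¬ r v v) {S : Set V}
    (h : IsKernel r S) : IsFixedSet (fun _ _ => False) r S := by
  intro v
  refine ⟨fun hv => ⟨fun _ => False.elim, fun u huv hu => ?_⟩, fun ⟨_, hv⟩ => ?_⟩
  · rcases eq_or_ne u v with rfl | hne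
    · exact hr u huv
    · exact h.1 hu hv hne huv
  · by_contra hvS
    obtain ⟨u, hu, huv⟩ := h.2 v hvS
    exact hv u huv hu

theorem isKernel_of_dominates_pair {r : V → V → Prop} {S T : Set V} {a b : V}
    (hT : T.Pairwise (fun u v => ¬ r u v)) (hST : S ⊆ T)
    (hS : ∀ v ∉ S, v ≠ a → v ≠ b → ∃ u ∈ S, r u v)
    (ha : a ∉ T → ∃ u ∈ T, r u a) (hb : b ∉ T → ∃ u ∈ T, r u b) : IsKernel r T := by
  refine ⟨hT, fun v hv => ?_⟩
  rcases eq_or_ne v a with rfl | hva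
  · exact ha hv
  rcases eq_or_ne v b with rfl | hvb
  · exact hb hv
  obtain ⟨u, hu, huv⟩ := hS v (fun h => hv (hST h)) hva hvb
  exact ⟨u, hST hu, huv⟩

theorem exists_pairwise_dominating_subset [Finite V] {r : V → V → Prop} (hr : Symmetric r)
    (R : Set V) :
    ∃ M ⊆ R, M.Pairwise (fun u v => ¬ r u v) ∧ ∀ w ∈ R, w ∉ M → ∃ u ∈ M, r u w := by
  obtain ⟨M, ⟨hMR, hM⟩, hmax⟩ := (toFinite {M : Set V | M ⊆ R ∧
    M.Pairwise (fun u v => ¬ r u v)}).exists_maximal ⟨∅, empty_subset _, pairwise_empty _⟩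
  refine ⟨M, hMR, hM, fun w hw hwM => ?_⟩
  by_contra! hfree
  have hins : insert w M ⊆ R ∧ (insert w M).Pairwise (fun u v => ¬ r u v) :=
    ⟨insert_subset hw hMR, hM.insert fun u hu _ => ⟨fun h => hfree u hu (hr h), hfree u hu⟩⟩
  exact hwM (hmax hins (subset_insert w M) (mem_insert w M))

section FixedSet

variable {pos neg : V → V → Prop} {S : Set V}

theorem IsFixedSet.pairwise (h : IsFixedSet pos neg S) : S.Pairwise (fun u v => ¬ neg u v) :=
  fun _ hu v hv _ huv => ((h v).1 hv).2 _ huv hu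

theorem IsFixedSet.exists_neg_of_notMem (h : IsFixedSet pos neg S) {v : V} (hv : v ∉ S)
    (hpos : ∀ u, pos u v → u ∈ S) : ∃ u ∈ S, neg u v := by
  by_contra! hfree
  exact hv ((h v).2 ⟨hpos, fun u huv hu => hfree u hu huv⟩)

end FixedSet

section SingleEdge

variable (neg : V → V → Prop) (a b : V)

abbrev edgeRel : V → V → Prop := fun u w => (u = a ∧ w = b) ∨ (u = b ∧ w = a)

abbrev negFlipped : V → V → Prop := fun u w => neg u w ∨ edgeRel a b u w

def offEdgeFixedSets : Set (Set V) :=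
  {S | IsFixedSet (edgeRel a b) neg S ∧ a ∉ S ∧ b ∉ S}

variable {neg a b}

theorem IsFixedSet.eq_pair (hcover : ∀ v : V, (v = b ∨ neg v a) ∨ (v = a ∨ neg v b))
    {S : Set V} (h : IsFixedSet (edgeRel a b) neg S) (hS : a ∈ S ∨ b ∈ S) : S = {a, b} := by
  have haS : a ∈ S := hS.elim id fun hb => ((h b).1 hb).1 a (Or.inl ⟨rfl, rfl⟩)
  have hbS : b ∈ S := ((h a).1 haS).1 b (Or.inr ⟨rfl, rfl⟩)
  refine Subset.antisymm (fun x hx => ?_) (insert_subset haS (singleton_subset_iff.2 hbS))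
  rcases hcover x with (rfl | hxa) | (rfl | hxb)
  · exact Or.inr rfl
  · exact absurd hx (((h a).1 haS).2 x hxa)
  · exact Or.inl rfl
  · exact absurd hx (((h b).1 hbS).2 x hxb)

theorem setOf_isFixedSet_subset (hcover : ∀ v : V, (v = b ∨ neg v a) ∨ (v = a ∨ neg v b)) :
    {S | IsFixedSet (edgeRel a b) neg S} ⊆ insert {a, b} (offEdgeFixedSets neg a b) := by
  intro S hS
  by_cases h : a ∈ S ∨ b ∈ S
  · exact Or.inl (hS.eq_pair hcover h)
  · push Not at h
    exact Or.inr ⟨hS, h⟩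

theorem negFlipped_irrefl (hab : a ≠ b) (hni : ∀ v, ¬ neg v v) (v : V) :
    ¬ negFlipped neg a b v v := by
  rintro (h | ⟨rfl, rfl⟩ | ⟨rfl, rfl⟩)
  exacts [hni v h, hab rfl, hab rfl]

theorem negFlipped_symm (hns : Symmetric neg) : Symmetric (negFlipped neg a b) := by
  rintro u w (h | h | h)
  exacts [Or.inl (hns h), Or.inr (Or.inr h.symm), Or.inr (Or.inl h.symm)]

variable (neg a b) in
open Classical in
noncomputable def kernelExtension (S : Set V) : Set V :=
  if ∃ u ∈ S, neg u a then (if ∃ u ∈ S, neg u b then S else insert b S) else insert a S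

theorem kernelExtension_diff_pair {S : Set V} (ha : a ∉ S) (hb : b ∉ S) :
    kernelExtension neg a b S \ {a, b} = S := by
  unfold kernelExtension
  split_ifs <;> ext x <;> simp only [mem_sdiff, mem_insert_iff, mem_singleton_iff] <;> grind

theorem injOn_kernelExtension : InjOn (kernelExtension neg a b) (offEdgeFixedSets neg a b) :=
  fun S hS T hT h => by
    rw [← kernelExtension_diff_pair hS.2.1 hS.2.2, h, kernelExtension_diff_pair hT.2.1 hT.2.2]

theorem isKernel_kernelExtension (hns : Symmetric neg) {S : Set V}
    (hS : S ∈ offEdgeFixedSets neg a b) :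
    IsKernel (negFlipped neg a b) (kernelExtension neg a b S) := by
  obtain ⟨hfix, haS, hbS⟩ := hS
  have hind : S.Pairwise (fun u v => ¬ negFlipped neg a b u v) := by
    rintro u hu v hv huv (h | ⟨rfl, -⟩ | ⟨rfl, -⟩)
    exacts [hfix.pairwise hu hv huv h, haS hu, hbS hu]
  have hdom : ∀ v ∉ S, v ≠ a → v ≠ b → ∃ u ∈ S, negFlipped neg a b u v := by
    intro v hv hva hvb
    obtain ⟨u, hu, huv⟩ := hfix.exists_neg_of_notMem hv (by
      rintro u (⟨-, rfl⟩ | ⟨-, rfl⟩)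
      exacts [absurd rfl hvb, absurd rfl hva])
    exact ⟨u, hu, Or.inl huv⟩
  have hins : ∀ x, (¬ ∃ u ∈ S, neg u x) →
      (insert x S).Pairwise (fun u v => ¬ negFlipped neg a b u v) := by
    refine fun x hfree => hind.insert fun u hu _ => ⟨?_, ?_⟩
    · rintro (h | ⟨-, rfl⟩ | ⟨-, rfl⟩)
      exacts [hfree ⟨u, hu, hns h⟩, hbS hu, haS hu]
    · rintro (h | ⟨rfl, -⟩ | ⟨rfl, -⟩)
      exacts [hfree ⟨u, hu, h⟩, haS hu, hbS hu]
  unfold kernelExtension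
  split_ifs with hda hdb
  · refine isKernel_of_dominates_pair hind subset_rfl hdom (fun _ => ?_) (fun _ => ?_)
    · obtain ⟨u, hu, h⟩ := hda; exact ⟨u, hu, Or.inl h⟩
    · obtain ⟨u, hu, h⟩ := hdb; exact ⟨u, hu, Or.inl h⟩
  · refine isKernel_of_dominates_pair (hins b hdb) (subset_insert b S) hdom
      (fun _ => ?_) (fun hb => absurd (mem_insert b S) hb)
    obtain ⟨u, hu, h⟩ := hda
    exact ⟨u, mem_insert_of_mem b hu, Or.inl h⟩
  · exact isKernel_of_dominates_pair (hins a hda) (subset_insert a S) hdom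
      (fun ha => absurd (mem_insert a S) ha)
      (fun _ => ⟨a, mem_insert a S, Or.inr (Or.inl ⟨rfl, rfl⟩)⟩)

theorem exists_isKernel_notMem_image_of_neg [Finite V] (hab : a ≠ b) (hns : Symmetric neg)
    (hni : ∀ v, ¬ neg v v) (hcover : ∀ v : V, (v = b ∨ neg v a) ∨ (v = a ∨ neg v b))
    (hC4 : ¬ ∃ u v, IsInducedC4 (fun x y => edgeRel a b x y ∨ neg x y) a b u v)
    {v : V} (hva : neg v a) (hvb : ¬ neg v b) (hvb' : v ≠ b) :
    ∃ T, IsKernel (negFlipped neg a b) T ∧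
      T ∉ kernelExtension neg a b '' offEdgeFixedSets neg a b := by
  have hva' : v ≠ a := fun h => hni a (h ▸ hva)
  obtain ⟨M, hMR, hM, hMdom⟩ := exists_pairwise_dominating_subset (negFlipped_symm hns)
    {w | w ≠ a ∧ ¬ negFlipped neg a b a w ∧ ¬ neg v w}
  have hvM : v ∉ M := fun h => (hMR h).2.1 (Or.inl (hns hva))
  refine ⟨insert a M, ⟨hM.insert fun u hu _ => ⟨(hMR hu).2.1,
    fun h => (hMR hu).2.1 (negFlipped_symm hns h)⟩, fun w hw => ?_⟩, ?_⟩
  · have hwa : w ≠ a := fun h => hw (h ▸ mem_insert a M)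
    by_cases haw : negFlipped neg a b a w
    · exact ⟨a, mem_insert a M, haw⟩
    have hwb : neg w b := by
      rcases hcover w with (rfl | hwa') | (rfl | hwb)
      exacts [absurd (Or.inr (Or.inl ⟨rfl, rfl⟩)) haw, absurd (Or.inl (hns hwa')) haw,
        absurd rfl hwa, hwb]
    have hvw : ¬ neg v w := by
      intro hvw
      refine hC4 ⟨w, v, hab, hwa.symm, hva'.symm, fun h => haw (Or.inr (Or.inl ⟨rfl, h.symm⟩)),
        hvb'.symm, fun h => hni v (h ▸ hvw), Or.inl (Or.inl ⟨rfl, rfl⟩), Or.inr (hns hwb),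
        Or.inr (hns hvw), Or.inr hva, fun h => haw h.symm, ?_⟩
      rintro ((⟨h, -⟩ | ⟨-, h⟩) | h)
      exacts [hab h.symm, hva' h, hvb (hns h)]
    obtain ⟨u, hu, huw⟩ := hMdom w ⟨hwa, haw, hvw⟩ (fun h => hw (mem_insert_of_mem a h))
    exact ⟨u, mem_insert_of_mem a hu, huw⟩
  · rintro ⟨S, hS, hST⟩
    have hST' : S = insert a M \ {a, b} := by rw [← hST, kernelExtension_diff_pair hS.2.1 hS.2.2]
    have hvS : v ∉ S := by
      rw [hST']
      exact fun h => (mem_insert_iff.1 h.1).elim hva' hvM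
    obtain ⟨u, hu, huv⟩ := hS.1.exists_neg_of_notMem hvS (by
      rintro u (⟨-, rfl⟩ | ⟨-, rfl⟩)
      exacts [absurd rfl hvb', absurd rfl hva'])
    rw [hST'] at hu
    rcases hu.1 with rfl | huM
    · exact hu.2 (Or.inl rfl)
    · exact (hMR huM).2.2 (hns huv)

theorem isKernel_singleton_right (hns : Symmetric neg)
    (hcover : ∀ v : V, (v = b ∨ neg v a) ∨ (v = a ∨ neg v b))
    (hall : ∀ w, neg w a → w ≠ b → neg w b) : IsKernel (negFlipped neg a b) {b} := by
  refine ⟨pairwise_singleton _ _, fun w hw => ⟨b, rfl, ?_⟩⟩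
  rcases hcover w with (rfl | hwa) | (rfl | hwb)
  exacts [absurd rfl hw, Or.inl (hns (hall w hwa hw)), Or.inr (Or.inr ⟨rfl, rfl⟩),
    Or.inl (hns hwb)]

theorem singleton_right_notMem_image (hab : a ≠ b) :
    {b} ∉ kernelExtension neg a b '' offEdgeFixedSets neg a b := by
  rintro ⟨S, hS, hSb⟩
  obtain rfl : S = ∅ := by
    rw [← kernelExtension_diff_pair hS.2.1 hS.2.2, hSb]
    exact sdiff_eq_empty.2 (singleton_subset_iff.2 (mem_insert_of_mem a rfl))
  simp [kernelExtension, hab] at hSb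

theorem exists_isKernel_notMem_image [Finite V] (hab : a ≠ b) (hns : Symmetric neg)
    (hni : ∀ v, ¬ neg v v) (hcover : ∀ v : V, (v = b ∨ neg v a) ∨ (v = a ∨ neg v b))
    (hC4 : ¬ ∃ u v, IsInducedC4 (fun x y => edgeRel a b x y ∨ neg x y) a b u v) :
    ∃ T, IsKernel (negFlipped neg a b) T ∧
      T ∉ kernelExtension neg a b '' offEdgeFixedSets neg a b := by
  by_cases h : ∃ v, neg v a ∧ ¬ neg v b ∧ v ≠ b
  · obtain ⟨v, hva, hvb, hvb'⟩ := h
    exact exists_isKernel_notMem_image_of_neg hab hns hni hcover hC4 hva hvb hvb'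
  · push Not at h
    exact ⟨{b}, isKernel_singleton_right hns hcover fun w hwa hwb => by_contra fun hw =>
      hwb (h w hwa hw), singleton_right_notMem_image hab⟩

end SingleEdge

end Kernel

theorem stmt10_general {V : Type*} [Fintype V] (neg : V → V → Prop) (a b : V) (hab : a ≠ b)
    (hns : Symmetric neg) (hni : ∀ v, ¬ neg v v)
    (hcover : ∀ v : V, (v = b ∨ neg v a) ∨ (v = a ∨ neg v b)) :
    fixc (fun u w => (u = a ∧ w = b) ∨ (u = b ∧ w = a)) neg ≤
        fixc (fun _ _ => False)
          (fun u w => neg u w ∨ (u = a ∧ w = b) ∨ (u = b ∧ w = a)) + 1 ∧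
    ((¬ ∃ u v, IsInducedC4
        (fun x y => ((x = a ∧ y = b) ∨ (x = b ∧ y = a)) ∨ neg x y) a b u v) →
      fixc (fun u w => (u = a ∧ w = b) ∨ (u = b ∧ w = a)) neg ≤
        fixc (fun _ _ => False)
          (fun u w => neg u w ∨ (u = a ∧ w = b) ∨ (u = b ∧ w = a))) := by
  set B := offEdgeFixedSets neg a b
  set extend := kernelExtension neg a b
  have hfixG : fixc (edgeRel a b) neg ≤ B.ncard + 1 :=
    (ncard_le_ncard (setOf_isFixedSet_subset hcover)).trans (ncard_insert_le _ _)
  have hkernel {T} (hT : IsKernel (negFlipped neg a b) T) :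
      T ∈ {T | IsFixedSet (fun _ _ => False) (negFlipped neg a b) T} :=
    hT.isFixedSet (negFlipped_irrefl hab hni)
  have himage : extend '' B ⊆ {T | IsFixedSet (fun _ _ => False) (negFlipped neg a b) T} := by
    rintro _ ⟨S, hS, rfl⟩
    exact hkernel (isKernel_kernelExtension hns hS)
  have hB : B.ncard = (extend '' B).ncard := injOn_kernelExtension.ncard_image.symm
  refine ⟨hfixG.trans ?_, fun hC4 => hfixG.trans ?_⟩
  · rw [hB]
    exact Nat.add_le_add_right (ncard_le_ncard himage) 1
  · obtain ⟨T, hT, hTB⟩ := exists_isKernel_notMem_image hab hns hni hcover hC4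
    rw [hB, ← ncard_insert_of_notMem hTB]
    exact ncard_le_ncard (insert_subset (hkernel hT) himage)

/-- Let `G` be a simple signed graph whose unique positive edge is `ab` and whose
vertex set is `N(a) ∪ N(b)`. Making `ab` negative decreases the number of fixed points
by at most one, and does not decrease it at all if `G` has no induced 4-cycle
containing the edge `ab`. -/
theorem stmt10 {V : Type*} [Fintype V] (neg : V → V → Prop) (a b : V) (hab : a ≠ b)
    (hns : Symmetric neg) (hni : ∀ v, ¬ neg v v) (hnab : ¬ neg a b)
    (hcover : ∀ v : V, (v = b ∨ neg v a) ∨ (v = a ∨ neg v b)) :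
    fixc (fun u w => (u = a ∧ w = b) ∨ (u = b ∧ w = a)) neg ≤
        fixc (fun _ _ => False)
          (fun u w => neg u w ∨ (u = a ∧ w = b) ∨ (u = b ∧ w = a)) + 1 ∧
    ((¬ ∃ u v, IsInducedC4
        (fun x y => ((x = a ∧ y = b) ∨ (x = b ∧ y = a)) ∨ neg x y) a b u v) →
      fixc (fun u w => (u = a ∧ w = b) ∨ (u = b ∧ w = a)) neg ≤
        fixc (fun _ _ => False)
          (fun u w => neg u w ∨ (u = a ∧ w = b) ∨ (u = b ∧ w = a))) :=
  stmt10_general neg a b hab hns hni hcover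
end

section
/- Let G be a simple signed graph whose set of positive edges is a matching, and let ab be a positive edge. Let G' be obtained from G by making ab negative. If G has an induced copy of C₄ containing a and b in which a and b are the only vertices adjacent to a positive edge, then fix(G) ≤ (3/2)·fix(G'); otherwise fix(G) ≤ fix(G'). -/
/-!
A fixed set of `G` contains `a` iff it contains `b`. A fixed set `S` avoiding both stays fixed in
`G'` after inserting whichever of `a`, `b` (tried in this order) has no negative neighbour in `S`,
and `S` is recovered by deleting `a` and `b`. A fixed set `S` containing both gives two fixed sets
of `G'`: delete one endpoint `c` and add a maximal independent set of the vertices that `c` alone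
kept out of `S`. Then `S` is `c` together with the vertices of the image not negatively adjacent
to `c`, and `a` lies in exactly one of the two images. Counting gives `fix G ≤ fix G' + |D|` and
`2 |D| ≤ fix G'`, where `D` consists of the sets `S ∋ a` both of whose images are also images of
sets avoiding `a`. For such an `S` some vertex `m'` is kept out by `a` alone, and in the fixed set
of `G` behind the other image the only possible inhibitor of `m'` is a vertex `m` kept out by `b`
alone: `a b m m'` is the induced 4-cycle.
-/

open Set

section Counting

variable {α β : Type*} {A I : Set α} {F : Set β} {φ f g : α → β}

theorem Set.ncard_add_ncard_le_of_injOn [Finite α] [Finite β] (hφ : MapsTo φ A F)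
    (hφi : InjOn φ A) (hf : MapsTo f I F) (hfi : InjOn f I) (hg : MapsTo g I F)
    (hgi : InjOn g I) (hfg : ∀ i ∈ I, ∀ j ∈ I, f i ≠ g j) :
    A.ncard + I.ncard ≤ F.ncard + {i ∈ I | f i ∈ φ '' A ∧ g i ∈ φ '' A}.ncard := by
  classical
  set D := {i ∈ I | f i ∈ φ '' A ∧ g i ∈ φ '' A}
  set h : α → β := fun i => if f i ∈ φ '' A then g i else f i
  have hh : MapsTo h (I \ D) (F \ φ '' A) := by
    rintro i ⟨hi, hiD⟩
    by_cases hfi : f i ∈ φ '' A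
    · simp only [h, if_pos hfi]
      exact ⟨hg hi, fun hgi => hiD ⟨hi, hfi, hgi⟩⟩
    · simp only [h, if_neg hfi]
      exact ⟨hf hi, hfi⟩
  have hhi : InjOn h (I \ D) := by
    rintro i ⟨hi, -⟩ j ⟨hj, -⟩ hij
    simp only [h] at hij
    split_ifs at hij
    exacts [hgi hi hj hij, absurd hij.symm (hfg j hj i hi), absurd hij (hfg i hi j hj),
      hfi hi hj hij]
  have hφA : φ '' A ⊆ F := hφ.image_subset
  calc A.ncard + I.ncard = (φ '' A).ncard + (I \ D).ncard + D.ncard := by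
        rw [hφi.ncard_image, add_assoc, ncard_sdiff_add_ncard_of_subset (sep_subset _ _)]
    _ ≤ (φ '' A).ncard + (F \ φ '' A).ncard + D.ncard := by
        gcongr
        exact ncard_le_ncard_of_injOn h hh hhi
    _ = F.ncard + D.ncard := by
        rw [add_comm (φ '' A).ncard, ncard_sdiff_add_ncard_of_subset hφA]

theorem Set.two_mul_ncard_le_of_injOn [Finite β] (hf : MapsTo f I F) (hfi : InjOn f I)
    (hg : MapsTo g I F) (hgi : InjOn g I) (hfg : ∀ i ∈ I, ∀ j ∈ I, f i ≠ g j) :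
    2 * I.ncard ≤ F.ncard := by
  have hdisj : Disjoint (f '' I) (g '' I) := by
    rw [disjoint_left]
    rintro _ ⟨i, hi, rfl⟩ ⟨j, hj, hij⟩
    exact hfg i hi j hj hij.symm
  calc 2 * I.ncard = (f '' I).ncard + (g '' I).ncard := by
        rw [hfi.ncard_image, hgi.ncard_image, two_mul]
    _ = (f '' I ∪ g '' I).ncard := (ncard_union_eq hdisj).symm
    _ ≤ F.ncard := ncard_le_ncard (union_subset hf.image_subset hg.image_subset)

end Counting

section SignedNetwork

variable {V : Type*} {pos neg : V → V → Prop}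

structure IsPosMatching (pos neg : V → V → Prop) : Prop where
  pos_symm : ∀ ⦃u v⦄, pos u v → pos v u
  neg_symm : ∀ ⦃u v⦄, neg u v → neg v u
  pos_irrefl : ∀ v, ¬ pos v v
  neg_irrefl : ∀ v, ¬ neg v v
  pos_unique : ∀ u v w, pos u v → pos u w → v = w

-- `flipPos pos a b` and `flipNeg neg a b` are the signed graph `G'`.
def flipPos (pos : V → V → Prop) (a b : V) : V → V → Prop :=
  fun u v => pos u v ∧ ¬ ((u = a ∧ v = b) ∨ (u = b ∧ v = a))

def flipNeg (neg : V → V → Prop) (a b : V) : V → V → Prop :=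
  fun u v => neg u v ∨ (u = a ∧ v = b) ∨ (u = b ∧ v = a)

theorem flipPos_comm (pos : V → V → Prop) (a b : V) : flipPos pos a b = flipPos pos b a := by
  funext u v
  simp only [flipPos, or_comm]

theorem flipNeg_comm (neg : V → V → Prop) (a b : V) : flipNeg neg a b = flipNeg neg b a := by
  funext u v
  simp only [flipNeg, or_comm]

theorem flipPos_iff {a b u v : V} (hva : v ≠ a) (hvb : v ≠ b) :
    flipPos pos a b u v ↔ pos u v := by
  simp [flipPos, hva, hvb]

theorem flipNeg_iff {a b u v : V} (hva : v ≠ a) (hvb : v ≠ b) :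
    flipNeg neg a b u v ↔ neg u v := by
  simp [flipNeg, hva, hvb]

namespace IsPosMatching

theorem ne_of_pos (hG : IsPosMatching pos neg) {u v : V} (h : pos u v) : u ≠ v :=
  fun huv => hG.pos_irrefl u (huv ▸ h)

theorem flip_cond_left_iff (hG : IsPosMatching pos neg) {c d : V} (hcd : pos c d)
    (R : Set V) :
    ((∀ u, flipPos pos c d u c → u ∈ R) ∧ ∀ u, flipNeg neg c d u c → u ∉ R) ↔
      d ∉ R ∧ ∀ u, neg u c → u ∉ R := by
  have hne := hG.ne_of_pos hcd
  have hpos : ∀ u, ¬ flipPos pos c d u c := fun u ⟨hu, hflip⟩ =>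
    hflip (Or.inr ⟨hG.pos_unique c u d (hG.pos_symm hu) hcd, rfl⟩)
  have hneg : ∀ u, flipNeg neg c d u c ↔ neg u c ∨ u = d := by
    simp [flipNeg, hne]
  simp only [hpos, hneg, false_imp_iff, implies_true, true_and, or_imp, forall_and,
    forall_eq, and_comm]

theorem flip_cond_right_iff (hG : IsPosMatching pos neg) {c d : V} (hcd : pos c d)
    (R : Set V) :
    ((∀ u, flipPos pos c d u d → u ∈ R) ∧ ∀ u, flipNeg neg c d u d → u ∉ R) ↔
      c ∉ R ∧ ∀ u, neg u d → u ∉ R := by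
  rw [flipPos_comm, flipNeg_comm]
  exact hG.flip_cond_left_iff (hG.pos_symm hcd) R

theorem isFixedSet_flip_of (hG : IsPosMatching pos neg) {c d : V} (hcd : pos c d) {R : Set V}
    (hc : c ∈ R ↔ d ∉ R ∧ ∀ u, neg u c → u ∉ R)
    (hd : d ∈ R ↔ c ∉ R ∧ ∀ u, neg u d → u ∉ R)
    (hv : ∀ v, v ≠ c → v ≠ d → (v ∈ R ↔ (∀ u, pos u v → u ∈ R) ∧ ∀ u, neg u v → u ∉ R)) :
    IsFixedSet (flipPos pos c d) (flipNeg neg c d) R := by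
  intro v
  rcases eq_or_ne v c with rfl | hvc
  · rwa [hG.flip_cond_left_iff hcd]
  rcases eq_or_ne v d with rfl | hvd
  · rwa [hG.flip_cond_right_iff hcd]
  simp only [flipPos_iff hvc hvd, flipNeg_iff hvc hvd]
  exact hv v hvc hvd

end IsPosMatching

structure IsIndepDominating (neg : V → V → Prop) (X M : Set V) : Prop where
  subset : M ⊆ X
  indep : ∀ m ∈ M, ∀ k ∈ M, ¬ neg m k
  dominating : ∀ x ∈ X, x ∉ M → ∃ m ∈ M, neg m x

theorem exists_isIndepDominating [Finite V] (hsymm : ∀ ⦃u v⦄, neg u v → neg v u)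
    (hirr : ∀ v, ¬ neg v v) (X : Set V) : ∃ M, IsIndepDominating neg X M := by
  obtain ⟨M, -, hM⟩ := Finite.exists_le_maximal
    (p := fun M : Set V => M ⊆ X ∧ ∀ m ∈ M, ∀ k ∈ M, ¬ neg m k) (a := ∅) (by simp)
  refine ⟨M, hM.1.1, hM.1.2, fun x hx hxM => ?_⟩
  by_contra! hfree
  refine hxM (hM.mem_of_prop_insert ⟨insert_subset hx hM.1.1, ?_⟩)
  rintro m (rfl | hm) k (rfl | hk)
  exacts [hirr _, fun h => hfree _ hk (hsymm h), hfree _ hm, hM.1.2 _ hm _ hk]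

-- For a fixed set `S ∋ c`, the vertices kept out of `S` by `c` alone.
def pinnedBy (pos neg : V → V → Prop) (S : Set V) (c : V) : Set V :=
  {w | (∀ x, ¬ pos x w) ∧ ∀ x ∈ S, neg x w ↔ x = c}

theorem notMem_sdiff_union_of_subset_pinnedBy {c d : V} (hdc : pos d c) {S M : Set V}
    (hM : M ⊆ pinnedBy pos neg S c) : c ∉ (S \ {c}) ∪ M := by
  rintro (h | h)
  exacts [h.2 rfl, (hM h).1 d hdc]

open Classical in
noncomputable def insertFirstFree (neg : V → V → Prop) (a b : V) (S : Set V) : Set V :=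
  if ∀ x ∈ S, ¬ neg x a then insert a S
  else if ∀ x ∈ S, ¬ neg x b then insert b S
  else S

theorem insertFirstFree_diff_pair {a b : V} {S : Set V} (ha : a ∉ S) (hb : b ∉ S) :
    insertFirstFree neg a b S \ {a, b} = S := by
  unfold insertFirstFree
  split_ifs <;> ext x <;> by_cases hxa : x = a <;> by_cases hxb : x = b <;> simp_all

theorem subset_insertFirstFree (a b : V) (S : Set V) : S ⊆ insertFirstFree neg a b S := by
  unfold insertFirstFree
  split_ifs <;> simp [subset_insert]

theorem exists_neg_of_notMem_insertFirstFree {a b : V} {S : Set V}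
    (h : a ∉ insertFirstFree neg a b S) : ∃ x ∈ S, neg x a := by
  unfold insertFirstFree at h
  by_contra! hfree
  rw [if_pos hfree] at h
  exact h (mem_insert a S)

def HasPinnedC4 (pos neg : V → V → Prop) (a b : V) : Prop :=
  ∃ u v, IsInducedC4 (fun x y => pos x y ∨ neg x y) a b u v ∧
    (∀ w, ¬ pos u w) ∧ (∀ w, ¬ pos v w)

namespace IsFixedSet

variable {S : Set V} {u v : V}

theorem pos_mem (hF : IsFixedSet pos neg S) (hv : v ∈ S) (h : pos u v) : u ∈ S :=
  ((hF v).1 hv).1 u h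

theorem neg_notMem (hF : IsFixedSet pos neg S) (hv : v ∈ S) (h : neg u v) : u ∉ S :=
  ((hF v).1 hv).2 u h

theorem exists_neg_mem (hF : IsFixedSet pos neg S) (hv : v ∉ S) (hpos : ∀ u, ¬ pos u v) :
    ∃ u ∈ S, neg u v := by
  by_contra! h
  exact hv ((hF v).2 ⟨fun u hu => absurd hu (hpos u), fun u hu huS => h u huS hu⟩)

theorem flip_insert (hF : IsFixedSet pos neg S) (hG : IsPosMatching pos neg) {c d : V}
    (hcd : pos c d) (hc : c ∉ S) (hd : d ∉ S) (hfree : ∀ x ∈ S, ¬ neg x c) :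
    IsFixedSet (flipPos pos c d) (flipNeg neg c d) (insert c S) := by
  have hne := hG.ne_of_pos hcd
  refine hG.isFixedSet_flip_of hcd ?_ ?_ fun v hvc hvd => ?_
  · refine iff_of_true (mem_insert c S) ⟨by simp [hd, hne.symm], fun u hu => ?_⟩
    rintro (rfl | huS)
    exacts [hG.neg_irrefl u hu, hfree u huS hu]
  · exact iff_of_false (by simp [hd, hne.symm]) (by simp)
  have hpos : ∀ u, pos u v → (u ∈ insert c S ↔ u ∈ S) := fun u hu => by
    have huc : u ≠ c := by
      rintro rfl
      exact hvd (hG.pos_unique _ _ _ hu hcd)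
    simp [huc]
  rw [mem_insert_iff, or_iff_right hvc, hF v]
  constructor
  · rintro ⟨hp, hn⟩
    refine ⟨fun u hu => (hpos u hu).2 (hp u hu), fun u hu => ?_⟩
    rintro (rfl | huS)
    exacts [hfree v ((hF v).2 ⟨hp, hn⟩) (hG.neg_symm hu), hn u hu huS]
  · rintro ⟨hp, hn⟩
    exact ⟨fun u hu => (hpos u hu).1 (hp u hu),
      fun u hu huS => hn u hu (mem_insert_of_mem c huS)⟩

theorem flip_of_exists_neg (hF : IsFixedSet pos neg S) (hG : IsPosMatching pos neg) {c d : V}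
    (hcd : pos c d) (hc : c ∉ S) (hd : d ∉ S) (hnc : ∃ x ∈ S, neg x c)
    (hnd : ∃ x ∈ S, neg x d) :
    IsFixedSet (flipPos pos c d) (flipNeg neg c d) S := by
  obtain ⟨x, hxS, hxc⟩ := hnc
  obtain ⟨y, hyS, hyd⟩ := hnd
  refine hG.isFixedSet_flip_of hcd ?_ ?_ fun v _ _ => hF v
  · exact iff_of_false hc fun h => h.2 x hxc hxS
  · exact iff_of_false hd fun h => h.2 y hyd hyS

theorem notMem_of_mem_pinnedBy (hF : IsFixedSet pos neg S) (hG : IsPosMatching pos neg)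
    {c w : V} (hc : c ∈ S) (hw : w ∈ pinnedBy pos neg S c) : w ∉ S :=
  hF.neg_notMem hc (hG.neg_symm ((hw.2 c hc).2 rfl))

theorem flip_release (hF : IsFixedSet pos neg S) (hG : IsPosMatching pos neg) {c d : V}
    (hcd : pos c d) (hc : c ∈ S) {M : Set V}
    (hM : IsIndepDominating neg (pinnedBy pos neg S c) M) :
    IsFixedSet (flipPos pos c d) (flipNeg neg c d) ((S \ {c}) ∪ M) := by
  have hne := hG.ne_of_pos hcd
  have hd : d ∈ S := hF.pos_mem hc (hG.pos_symm hcd)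
  have hMpos : ∀ m ∈ M, ∀ x, ¬ pos x m := fun m hm => (hM.subset hm).1
  have hMneg : ∀ m ∈ M, ∀ x ∈ S, neg x m → x = c := fun m hm x hx =>
    ((hM.subset hm).2 x hx).1
  have hcR : c ∉ (S \ {c}) ∪ M :=
    notMem_sdiff_union_of_subset_pinnedBy (hG.pos_symm hcd) hM.subset
  have hdR : d ∈ (S \ {c}) ∪ M := Or.inl ⟨hd, hne.symm⟩
  refine hG.isFixedSet_flip_of hcd (iff_of_false hcR fun h => h.1 hdR)
    (iff_of_true hdR ⟨hcR, fun u hu => ?_⟩) fun v hvc hvd => ⟨fun hvR => ?_, fun hcond => ?_⟩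
  · rintro (huS | huM)
    exacts [hF.neg_notMem hd hu huS.1, hne.symm (hMneg u huM d hd (hG.neg_symm hu))]
  · rcases hvR with hvS | hvM
    · refine ⟨fun u hu => Or.inl ⟨hF.pos_mem hvS.1 hu, ?_⟩, fun u hu => ?_⟩
      · rintro rfl
        exact hvd (hG.pos_unique _ _ _ hu hcd)
      rintro (huS | huM)
      exacts [hF.neg_notMem hvS.1 hu huS.1, hvS.2 (hMneg u huM v hvS.1 (hG.neg_symm hu))]
    · refine ⟨fun u hu => absurd hu (hMpos v hvM u), fun u hu => ?_⟩
      rintro (huS | huM)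
      exacts [huS.2 (hMneg v hvM u huS.1 hu), hM.indep u huM v hvM hu]
  · by_contra hvR
    have hvS : v ∉ S := fun h => hvR (Or.inl ⟨h, hvc⟩)
    have hvpos : ∀ x, ¬ pos x v := by
      intro x hx
      rcases hcond.1 x hx with hxS | hxM
      exacts [hvS (hF.pos_mem hxS.1 (hG.pos_symm hx)), hMpos x hxM v (hG.pos_symm hx)]
    have honly : ∀ x ∈ S, neg x v → x = c := fun x hxS hx =>
      by_contra fun hxc => hcond.2 x hx (Or.inl ⟨hxS, hxc⟩)
    have hpinned : v ∈ pinnedBy pos neg S c := by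
      refine ⟨hvpos, fun x hxS => ⟨honly x hxS, ?_⟩⟩
      rintro rfl
      obtain ⟨y, hyS, hy⟩ := hF.exists_neg_mem hvS hvpos
      rwa [← honly y hyS hy]
    obtain ⟨m, hmM, hm⟩ := hM.dominating v hpinned fun h => hvR (Or.inr h)
    exact hcond.2 m hm (Or.inr hmM)

theorem flip_insertFirstFree (hF : IsFixedSet pos neg S) (hG : IsPosMatching pos neg)
    {a b : V} (hab : pos a b) (ha : a ∉ S) (hb : b ∉ S) :
    IsFixedSet (flipPos pos a b) (flipNeg neg a b) (insertFirstFree neg a b S) := by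
  unfold insertFirstFree
  split_ifs with hfa hfb
  · exact hF.flip_insert hG hab ha hb hfa
  · rw [flipPos_comm, flipNeg_comm]
    exact hF.flip_insert hG (hG.pos_symm hab) hb ha hfb
  · push Not at hfa hfb
    exact hF.flip_of_exists_neg hG hab ha hb hfa hfb

theorem insert_sep_release (hF : IsFixedSet pos neg S) (hG : IsPosMatching pos neg) {c : V}
    (hc : c ∈ S) {M : Set V} (hM : M ⊆ pinnedBy pos neg S c) :
    insert c {x ∈ (S \ {c}) ∪ M | ¬ neg x c} = S := by
  ext x
  rcases eq_or_ne x c with rfl | hxc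
  · simpa using hc
  simp only [mem_insert_iff, hxc, false_or, mem_ofPred_eq, mem_union, mem_sdiff,
    mem_singleton_iff, not_false_eq_true, and_true]
  refine ⟨fun ⟨hx, hneg⟩ => hx.resolve_right fun hxM => hneg ?_, fun hxS =>
    ⟨Or.inl hxS, fun h => hF.neg_notMem hc h hxS⟩⟩
  exact hG.neg_symm (((hM hxM).2 c hc).2 rfl)

theorem hasPinnedC4 (hF : IsFixedSet pos neg S) (hG : IsPosMatching pos neg) {a b : V}
    (hab : pos a b) (ha : a ∈ S) {m' : V} (hm' : m' ∈ pinnedBy pos neg S a) {Q : Set V}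
    (hQ : IsFixedSet pos neg Q) (hQS : Q ⊆ (S \ {a}) ∪ pinnedBy pos neg S b) :
    HasPinnedC4 pos neg a b := by
  have hne := hG.ne_of_pos hab
  have hb : b ∈ S := hF.pos_mem ha (hG.pos_symm hab)
  have ham' : neg a m' := (hm'.2 a ha).2 rfl
  have hbm' : ¬ neg b m' := fun h => hne ((hm'.2 b hb).1 h).symm
  have hm'Q : m' ∉ Q := fun h =>
    (hQS h).elim (fun h => hF.notMem_of_mem_pinnedBy hG ha hm' h.1) fun h => hne ((h.2 a ha).1 ham')
  obtain ⟨m, hmQ, hmm'⟩ := hQ.exists_neg_mem hm'Q hm'.1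
  have hm : m ∈ pinnedBy pos neg S b :=
    (hQS hmQ).resolve_left fun h => h.2 ((hm'.2 m h.1).1 hmm')
  have hbm : neg b m := (hm.2 b hb).2 rfl
  have ham : ¬ neg a m := fun h => hne ((hm.2 a ha).1 h)
  refine ⟨m, m', ⟨hne, fun h => hm.1 b (h ▸ hG.pos_symm hab),
    fun h => hm'.1 b (h ▸ hG.pos_symm hab), fun h => hm.1 a (h ▸ hab), fun h => hm'.1 a (h ▸ hab),
    fun h => hG.neg_irrefl m (h ▸ hmm'),
    Or.inl hab, Or.inr hbm, Or.inr hmm', Or.inr (hG.neg_symm ham'), ?_, ?_⟩,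
    fun w h => hm.1 w (hG.pos_symm h), fun w h => hm'.1 w (hG.pos_symm h)⟩
  · rintro (h | h)
    exacts [hm.1 a h, ham h]
  · rintro (h | h)
    exacts [hm'.1 b h, hbm' h]

theorem hasPinnedC4_of_insertFirstFree_eq (hF : IsFixedSet pos neg S)
    (hG : IsPosMatching pos neg) {a b : V} (hab : pos a b) (ha : a ∈ S) {Ma Mb : Set V}
    (hMa : Ma ⊆ pinnedBy pos neg S a) (hMb : Mb ⊆ pinnedBy pos neg S b) {S₂ S₃ : Set V}
    (h₂ : insertFirstFree neg a b S₂ = (S \ {a}) ∪ Ma) (hF₃ : IsFixedSet pos neg S₃)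
    (ha₃ : a ∉ S₃) (hb₃ : b ∉ S₃) (h₃ : insertFirstFree neg a b S₃ = (S \ {b}) ∪ Mb) :
    HasPinnedC4 pos neg a b := by
  have ha₂ : a ∉ insertFirstFree neg a b S₂ :=
    h₂ ▸ notMem_sdiff_union_of_subset_pinnedBy (hG.pos_symm hab) hMa
  obtain ⟨m', hm'S₂, hm'⟩ := exists_neg_of_notMem_insertFirstFree ha₂
  have hm'Ma : m' ∈ Ma := by
    have := h₂ ▸ subset_insertFirstFree a b S₂ hm'S₂
    exact this.resolve_left fun h => hF.neg_notMem ha hm' h.1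
  refine hF.hasPinnedC4 hG hab ha (hMa hm'Ma) hF₃ fun x hx => ?_
  rw [← insertFirstFree_diff_pair (neg := neg) ha₃ hb₃, h₃] at hx
  obtain ⟨hxS | hxMb, hxab⟩ := hx
  · exact Or.inl ⟨hxS.1, fun h => hxab (Or.inl h)⟩
  · exact Or.inr (hMb hxMb)

end IsFixedSet

theorem IsPosMatching.exists_fixc_le_fixc_flip_add [Finite V] (hG : IsPosMatching pos neg)
    {a b : V} (hab : pos a b) :
    ∃ d, fixc pos neg ≤ fixc (flipPos pos a b) (flipNeg neg a b) + d ∧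
      2 * d ≤ fixc (flipPos pos a b) (flipNeg neg a b) ∧
      (d ≠ 0 → HasPinnedC4 pos neg a b) := by
  choose sel hsel using exists_isIndepDominating hG.neg_symm hG.neg_irrefl
  set F := {S : Set V | IsFixedSet pos neg S}
  set F' := {R : Set V | IsFixedSet (flipPos pos a b) (flipNeg neg a b) R}
  have hb_of_a : ∀ S ∈ F, a ∈ S → b ∈ S := fun S hF ha => hF.pos_mem ha (hG.pos_symm hab)
  have ha_of_b : ∀ S ∈ F, b ∈ S → a ∈ S := fun S hF hb => hF.pos_mem hb hab
  set A := {S | IsFixedSet pos neg S ∧ a ∉ S}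
  set I := {S | IsFixedSet pos neg S ∧ a ∈ S}
  set φ := insertFirstFree neg a b
  set f := fun S => (S \ {a}) ∪ sel (pinnedBy pos neg S a)
  set g := fun S => (S \ {b}) ∪ sel (pinnedBy pos neg S b)
  have hφ : MapsTo φ A F' := fun S ⟨hF, ha⟩ =>
    hF.flip_insertFirstFree hG hab ha fun hb => ha (ha_of_b S hF hb)
  have hφi : InjOn φ A := LeftInvOn.injOn (f₁' := (· \ {a, b})) fun S ⟨hF, ha⟩ =>
    insertFirstFree_diff_pair ha fun hb => ha (ha_of_b S hF hb)
  have hf : MapsTo f I F' := fun S ⟨hF, ha⟩ => hF.flip_release hG hab ha (hsel _)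
  have hfi : InjOn f I := LeftInvOn.injOn (f₁' := fun R => insert a {x ∈ R | ¬ neg x a})
    fun S ⟨hF, ha⟩ => hF.insert_sep_release hG ha (hsel _).subset
  have hg : MapsTo g I F' := fun S ⟨hF, ha⟩ => by
    rw [mem_ofPred_eq, flipPos_comm, flipNeg_comm]
    exact hF.flip_release hG (hG.pos_symm hab) (hb_of_a S hF ha) (hsel _)
  have hgi : InjOn g I := LeftInvOn.injOn (f₁' := fun R => insert b {x ∈ R | ¬ neg x b})
    fun S ⟨hF, ha⟩ => hF.insert_sep_release hG (hb_of_a S hF ha) (hsel _).subset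
  have hfg : ∀ S ∈ I, ∀ T ∈ I, f S ≠ g T := fun S _ T ⟨_, ha⟩ h => by
    have haf : a ∈ f S := h ▸ Or.inl ⟨ha, hG.ne_of_pos hab⟩
    exact notMem_sdiff_union_of_subset_pinnedBy (hG.pos_symm hab) (hsel _).subset haf
  refine ⟨{S ∈ I | f S ∈ φ '' A ∧ g S ∈ φ '' A}.ncard, ?_, ?_, fun hD => ?_⟩
  · have hsplit : I.ncard + A.ncard = F.ncard :=
      ncard_inter_add_ncard_sdiff_eq_ncard F {S | a ∈ S}
    have hcount := ncard_add_ncard_le_of_injOn hφ hφi hf hfi hg hgi hfg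
    change F.ncard ≤ F'.ncard + _
    omega
  · calc 2 * _ ≤ 2 * I.ncard := Nat.mul_le_mul_left 2 (ncard_le_ncard (sep_subset _ _))
      _ ≤ _ := two_mul_ncard_le_of_injOn hf hfi hg hgi hfg
  · obtain ⟨S, ⟨hF, ha⟩, ⟨S₂, -, h₂⟩, ⟨S₃, ⟨hF₃, ha₃⟩, h₃⟩⟩ := nonempty_of_ncard_ne_zero hD
    exact hF.hasPinnedC4_of_insertFirstFree_eq hG hab ha (hsel _).subset (hsel _).subset h₂ hF₃
      ha₃ (fun hb => ha₃ (ha_of_b S₃ hF₃ hb)) h₃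

end SignedNetwork

theorem stmt11_general {V : Type*} [Fintype V] (pos neg : V → V → Prop)
    (hps : Symmetric pos) (hns : Symmetric neg)
    (hpi : ∀ v, ¬ pos v v) (hni : ∀ v, ¬ neg v v)
    (hmatch : ∀ u v w, pos u v → pos u w → v = w)
    (a b : V) (hab : pos a b) :
    ((∃ u v, IsInducedC4 (fun x y => pos x y ∨ neg x y) a b u v ∧
        (∀ w, ¬ pos u w) ∧ (∀ w, ¬ pos v w)) →
      (fixc pos neg : ℚ) ≤ 3 / 2 *
        fixc (fun u v => pos u v ∧ ¬ ((u = a ∧ v = b) ∨ (u = b ∧ v = a)))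
          (fun u v => neg u v ∨ (u = a ∧ v = b) ∨ (u = b ∧ v = a))) ∧
    ((¬ ∃ u v, IsInducedC4 (fun x y => pos x y ∨ neg x y) a b u v ∧
        (∀ w, ¬ pos u w) ∧ (∀ w, ¬ pos v w)) →
      fixc pos neg ≤
        fixc (fun u v => pos u v ∧ ¬ ((u = a ∧ v = b) ∨ (u = b ∧ v = a)))
          (fun u v => neg u v ∨ (u = a ∧ v = b) ∨ (u = b ∧ v = a))) := by
  obtain ⟨d, hle, hd, hC4⟩ :=
    IsPosMatching.exists_fixc_le_fixc_flip_add ⟨hps, hns, hpi, hni, hmatch⟩ hab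
  refine ⟨fun _ => ?_, fun hno => ?_⟩
  · change (fixc pos neg : ℚ) ≤ 3 / 2 * fixc (flipPos pos a b) (flipNeg neg a b)
    have hle' : (fixc pos neg : ℚ) ≤ fixc (flipPos pos a b) (flipNeg neg a b) + d := by
      exact_mod_cast hle
    have hd' : (2 * d : ℚ) ≤ fixc (flipPos pos a b) (flipNeg neg a b) := by exact_mod_cast hd
    linarith
  · obtain rfl : d = 0 := by
      by_contra h
      exact hno (hC4 h)
    exact hle

/-- Let `G` be a simple signed graph whose positive edges form a matching and let `ab`
be a positive edge; let `G'` be obtained by making `ab` negative. If `G` has an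
induced 4-cycle through `a, b` in which `a` and `b` are the only vertices adjacent to a
positive edge, then `fix(G) ≤ (3/2)·fix(G')`; otherwise `fix(G) ≤ fix(G')`. -/
theorem stmt11 {V : Type*} [Fintype V] (pos neg : V → V → Prop)
    (hps : Symmetric pos) (hns : Symmetric neg)
    (hpi : ∀ v, ¬ pos v v) (hni : ∀ v, ¬ neg v v)
    (hd : ∀ u v, pos u v → ¬ neg u v)
    (hmatch : ∀ u v w, pos u v → pos u w → v = w)
    (a b : V) (hab : pos a b) :
    ((∃ u v, IsInducedC4 (fun x y => pos x y ∨ neg x y) a b u v ∧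
        (∀ w, ¬ pos u w) ∧ (∀ w, ¬ pos v w)) →
      (fixc pos neg : ℚ) ≤ 3 / 2 *
        fixc (fun u v => pos u v ∧ ¬ ((u = a ∧ v = b) ∨ (u = b ∧ v = a)))
          (fun u v => neg u v ∨ (u = a ∧ v = b) ∨ (u = b ∧ v = a))) ∧
    ((¬ ∃ u v, IsInducedC4 (fun x y => pos x y ∨ neg x y) a b u v ∧
        (∀ w, ¬ pos u w) ∧ (∀ w, ¬ pos v w)) →
      fixc pos neg ≤
        fixc (fun u v => pos u v ∧ ¬ ((u = a ∧ v = b) ∨ (u = b ∧ v = a)))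
          (fun u v => neg u v ∨ (u = a ∧ v = b) ∨ (u = b ∧ v = a))) :=
  stmt11_general pos neg hps hns hpi hni hmatch a b hab
end

section
/- Let G be a simple signed graph and C a non-trivial connected component of the positive subgraph G⁺. Let G/C be the simple signed graph obtained by contracting C to a single vertex c, adding a new vertex c' and a negative edge cc', and making all remaining edges incident to c negative (other edges keep their signs). Then fix(G) ≤ fix(G/C), with equality if G[C] has no negative edge. -/
/-- Positive edges of the contraction `G/C`: vertices are `{v // v ∉ C} ⊕ Fin 2`,
where `Sum.inr 0` is the contracted vertex `c` and `Sum.inr 1` is the pendant `c'`;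
all edges incident to `c` or `c'` are negative. -/
def cpos {V : Type*} (pos : V → V → Prop) (C : Set V) :
    ({v : V // v ∉ C} ⊕ Fin 2) → ({v : V // v ∉ C} ⊕ Fin 2) → Prop
  | Sum.inl u, Sum.inl v => pos u.1 v.1
  | _, _ => False

/-- Negative edges of the contraction `G/C`: edges of `G − C` keep their negative
edges, every merged edge from `C` to the rest becomes a negative edge at `c`,
and `cc'` is a negative edge. -/
def cneg {V : Type*} (pos neg : V → V → Prop) (C : Set V) :
    ({v : V // v ∉ C} ⊕ Fin 2) → ({v : V // v ∉ C} ⊕ Fin 2) → Prop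
  | Sum.inl u, Sum.inl v => neg u.1 v.1
  | Sum.inl u, Sum.inr i => i = 0 ∧ ∃ w ∈ C, pos u.1 w ∨ neg u.1 w
  | Sum.inr i, Sum.inl u => i = 0 ∧ ∃ w ∈ C, pos u.1 w ∨ neg u.1 w
  | Sum.inr i, Sum.inr j => i ≠ j

section

open Relation Set

variable {V : Type*} {pos neg : V → V → Prop} {C S : Set V} {u v w : V}

namespace IsFixedSet

theorem notMem_of_neg (hS : IsFixedSet pos neg S) (h : neg u v) (hv : v ∈ S) : u ∉ S :=
  ((hS v).mp hv).2 u h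

theorem mem_iff_of_pos [Std.Symm pos] (hS : IsFixedSet pos neg S) (h : pos u v) :
    u ∈ S ↔ v ∈ S :=
  ⟨fun hu => ((hS u).mp hu).1 v (symm h), fun hv => ((hS v).mp hv).1 u h⟩

theorem mem_iff_of_reflTransGen [Std.Symm pos] (hS : IsFixedSet pos neg S)
    (h : ReflTransGen pos u v) : u ∈ S ↔ v ∈ S := by
  induction h with
  | refl => rfl
  | tail _ hpos ih => exact ih.trans (hS.mem_iff_of_pos hpos)

theorem mem_iff_of_mem [Std.Symm pos] (hC : ∀ v, v ∈ C ↔ ReflTransGen pos w v)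
    (hS : IsFixedSet pos neg S) (hv : v ∈ C) : v ∈ S ↔ w ∈ S :=
  (hS.mem_iff_of_reflTransGen ((hC v).mp hv)).symm

end IsFixedSet

theorem mem_of_pos_of_mem (hC : ∀ v, v ∈ C ↔ ReflTransGen pos w v) (h : pos u v) (hu : u ∈ C) :
    v ∈ C :=
  (hC v).mpr (((hC u).mp hu).tail h)

theorem exists_pos_of_mem [Std.Symm pos] (hC : ∀ v, v ∈ C ↔ ReflTransGen pos w v)
    (hnt : C.Nontrivial) (hv : v ∈ C) : ∃ u, pos u v := by
  obtain ⟨y, hy, hyv⟩ : ∃ y ∈ C, y ≠ v := by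
    obtain ⟨a, ha, b, hb, hab⟩ := hnt
    by_cases hav : a = v
    · exact ⟨b, hb, hav ▸ hab.symm⟩
    · exact ⟨a, ha, hav⟩
  obtain hvy | ⟨u, -, huv⟩ := ((symm ((hC y).mp hy)).trans ((hC v).mp hv)).cases_tail
  · exact absurd hvy.symm hyv
  · exact ⟨u, huv⟩

theorem forall_pos_and_forall_neg_iff_of_notMem [Std.Symm pos] [Std.Symm neg]
    (hC : ∀ v, v ∈ C ↔ ReflTransGen pos w v) {p : Prop} (hS : ∀ u ∈ C, u ∈ S ↔ p)
    (hv : v ∉ C) :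
    ((∀ u, pos u v → u ∈ S) ∧ (∀ u, neg u v → u ∉ S)) ↔
      (∀ u : {v : V // v ∉ C}, pos u v → u.1 ∈ S) ∧
      (∀ u : {v : V // v ∉ C}, neg u v → u.1 ∉ S) ∧
      ((∃ z ∈ C, pos v z ∨ neg v z) → ¬p) := by
  have hpos : (∀ u, pos u v → u ∈ S) ↔ ∀ u : {v : V // v ∉ C}, pos u v → u.1 ∈ S :=
    ⟨fun h u => h u, fun h u huv => h ⟨u, fun hu => hv (mem_of_pos_of_mem hC huv hu)⟩ huv⟩
  have hneg : (∀ u, neg u v → u ∉ S) ↔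
      (∀ u : {v : V // v ∉ C}, neg u v → u.1 ∉ S) ∧ ((∃ z ∈ C, pos v z ∨ neg v z) → ¬p) := by
    constructor
    · refine fun h => ⟨fun u => h u, ?_⟩
      rintro ⟨z, hz, hvz | hvz⟩
      · exact absurd (mem_of_pos_of_mem hC (symm hvz) hz) hv
      · exact (hS z hz).not.mp (h z (symm hvz))
    · rintro ⟨h, hCv⟩ u huv
      by_cases hu : u ∈ C
      · exact (hS u hu).not.mpr (hCv ⟨u, hu, .inr (symm huv)⟩)
      · exact h ⟨u, hu⟩ huv
  rw [hpos, hneg]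

theorem isFixedSet_cpos_cneg_iff (T : Set ({v : V // v ∉ C} ⊕ Fin 2)) :
    IsFixedSet (cpos pos C) (cneg pos neg C) T ↔
      (∀ v : {v : V // v ∉ C}, Sum.inl v ∈ T ↔
        (∀ u : {v : V // v ∉ C}, pos u v → Sum.inl u ∈ T) ∧
        (∀ u : {v : V // v ∉ C}, neg u v → Sum.inl u ∉ T) ∧
        ((∃ z ∈ C, pos v z ∨ neg v z) → Sum.inr 0 ∉ T)) ∧
      (Sum.inr 0 ∈ T ↔
        (∀ u : {v : V // v ∉ C}, (∃ z ∈ C, pos u z ∨ neg u z) → Sum.inl u ∉ T) ∧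
        Sum.inr 1 ∉ T) ∧
      (Sum.inr 1 ∈ T ↔ Sum.inr 0 ∉ T) := by
  simp [IsFixedSet, Sum.forall, Fin.forall_fin_two, cpos, cneg]

def contractSet (C : Set V) (w : V) (S : Set V) : Set ({v : V // v ∉ C} ⊕ Fin 2) :=
  Sum.elim (fun v => v.1 ∈ S) (fun i => if i = 0 then w ∈ S else w ∉ S)

@[simp]
theorem inl_mem_contractSet {v : {v : V // v ∉ C}} : Sum.inl v ∈ contractSet C w S ↔ v.1 ∈ S :=
  Iff.rfl

@[simp]
theorem inr_zero_mem_contractSet : Sum.inr 0 ∈ contractSet C w S ↔ w ∈ S :=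
  Iff.rfl

@[simp]
theorem inr_one_mem_contractSet : Sum.inr 1 ∈ contractSet C w S ↔ w ∉ S :=
  Iff.rfl

theorem IsFixedSet.contractSet [Std.Symm pos] [Std.Symm neg]
    (hC : ∀ v, v ∈ C ↔ ReflTransGen pos w v) (hS : IsFixedSet pos neg S) :
    IsFixedSet (cpos pos C) (cneg pos neg C) (contractSet C w S) := by
  rw [isFixedSet_cpos_cneg_iff]
  simp only [inl_mem_contractSet, inr_zero_mem_contractSet, inr_one_mem_contractSet, not_not]
  refine ⟨fun v => ?_, ⟨fun hw => ⟨?_, hw⟩, And.right⟩, trivial⟩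
  · rw [hS v.1,
      forall_pos_and_forall_neg_iff_of_notMem hC (fun u hu => hS.mem_iff_of_mem hC hu) v.2]
  · rintro u ⟨z, hz, huz | huz⟩
    · exact absurd (mem_of_pos_of_mem hC (symm huz) hz) u.2
    · exact hS.notMem_of_neg huz ((hS.mem_iff_of_mem hC hz).mpr hw)

theorem injOn_contractSet [Std.Symm pos] (hC : ∀ v, v ∈ C ↔ ReflTransGen pos w v) :
    InjOn (contractSet C w) {S : Set V | IsFixedSet pos neg S} := by
  intro S hS S' hS' h
  ext v
  by_cases hv : v ∈ C
  · rw [hS.mem_iff_of_mem hC hv, hS'.mem_iff_of_mem hC hv]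
    exact Set.ext_iff.mp h (Sum.inr 0)
  · exact Set.ext_iff.mp h (Sum.inl ⟨v, hv⟩)

open Classical in
noncomputable def expandSet (C : Set V) (T : Set ({v : V // v ∉ C} ⊕ Fin 2)) : Set V :=
  {v | if h : v ∈ C then Sum.inr 0 ∈ T else Sum.inl ⟨v, h⟩ ∈ T}

variable {T : Set ({v : V // v ∉ C} ⊕ Fin 2)}

theorem mem_expandSet_of_mem (hv : v ∈ C) : v ∈ expandSet C T ↔ Sum.inr 0 ∈ T := by
  simp [expandSet, hv]

@[simp]
theorem val_mem_expandSet {v : {v : V // v ∉ C}} : v.1 ∈ expandSet C T ↔ Sum.inl v ∈ T := by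
  simp [expandSet, v.2]

theorem IsFixedSet.expandSet [Std.Symm pos] [Std.Symm neg]
    (hC : ∀ v, v ∈ C ↔ ReflTransGen pos w v) (hnt : C.Nontrivial)
    (hno : ∀ u ∈ C, ∀ v ∈ C, ¬ neg u v) (hT : IsFixedSet (cpos pos C) (cneg pos neg C) T) :
    IsFixedSet pos neg (expandSet C T) := by
  obtain ⟨hl, h0, -⟩ := (isFixedSet_cpos_cneg_iff T).mp hT
  intro v
  by_cases hv : v ∈ C
  · rw [mem_expandSet_of_mem hv]
    constructor
    · intro hc
      refine ⟨fun u huv => (mem_expandSet_of_mem (mem_of_pos_of_mem hC (symm huv) hv)).mpr hc,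
        fun u huv => ?_⟩
      have hu : u ∉ C := fun hu => hno u hu v hv huv
      exact (val_mem_expandSet (v := ⟨u, hu⟩)).not.mpr ((h0.mp hc).1 ⟨u, hu⟩ ⟨v, hv, .inr huv⟩)
    · rintro ⟨hpos, -⟩
      obtain ⟨u, huv⟩ := exists_pos_of_mem hC hnt hv
      exact (mem_expandSet_of_mem (mem_of_pos_of_mem hC (symm huv) hv)).mp (hpos u huv)
  · rw [val_mem_expandSet (v := ⟨v, hv⟩), hl,
      forall_pos_and_forall_neg_iff_of_notMem hC (fun u hu => mem_expandSet_of_mem hu) hv]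
    simp only [val_mem_expandSet]

theorem injOn_expandSet (hw : w ∈ C) :
    InjOn (expandSet C) {T : Set ({v : V // v ∉ C} ⊕ Fin 2) |
      IsFixedSet (cpos pos C) (cneg pos neg C) T} := by
  intro T hT T' hT' h
  have h0 : Sum.inr 0 ∈ T ↔ Sum.inr 0 ∈ T' := by
    rw [← mem_expandSet_of_mem hw, ← mem_expandSet_of_mem hw, h]
  ext (v | i)
  · rw [← val_mem_expandSet, ← val_mem_expandSet, h]
  · match i with
    | 0 => exact h0
    | 1 =>
      rw [((isFixedSet_cpos_cneg_iff T).mp hT).2.2, ((isFixedSet_cpos_cneg_iff T').mp hT').2.2]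
      exact h0.not

theorem fixc_le_fixc_cpos_cneg [Finite V] [Std.Symm pos] [Std.Symm neg]
    (hC : ∀ v, v ∈ C ↔ ReflTransGen pos w v) :
    fixc pos neg ≤ fixc (cpos pos C) (cneg pos neg C) :=
  ncard_le_ncard_of_injOn _ (fun _ hS => hS.contractSet hC) (injOn_contractSet hC)

theorem fixc_cpos_cneg_le_fixc [Finite V] [Std.Symm pos] [Std.Symm neg]
    (hC : ∀ v, v ∈ C ↔ ReflTransGen pos w v) (hnt : C.Nontrivial)
    (hno : ∀ u ∈ C, ∀ v ∈ C, ¬ neg u v) :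
    fixc (cpos pos C) (cneg pos neg C) ≤ fixc pos neg :=
  ncard_le_ncard_of_injOn _ (fun _ hT => hT.expandSet hC hnt hno)
    (injOn_expandSet ((hC w).mpr .refl))

end

theorem stmt14_general {V : Type*} [Fintype V] (pos neg : V → V → Prop)
    (hps : Symmetric pos) (hns : Symmetric neg)
    (C : Set V)
    (hC : ∃ w ∈ C, ∀ v, v ∈ C ↔ Relation.ReflTransGen pos w v)
    (hnt : ∃ u ∈ C, ∃ v ∈ C, u ≠ v) :
    fixc pos neg ≤ fixc (cpos pos C) (cneg pos neg C) ∧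
    ((∀ u ∈ C, ∀ v ∈ C, ¬ neg u v) →
      fixc pos neg = fixc (cpos pos C) (cneg pos neg C)) := by
  have : Std.Symm pos := ⟨fun _ _ h => hps h⟩
  have : Std.Symm neg := ⟨fun _ _ h => hns h⟩
  obtain ⟨w, -, hC⟩ := hC
  have hle : fixc pos neg ≤ _ := fixc_le_fixc_cpos_cneg hC
  exact ⟨hle, fun hno => hle.antisymm (fixc_cpos_cneg_le_fixc hC hnt hno)⟩

/-- If `C` is a non-trivial connected component of the positive subgraph of a simple
signed graph `G`, then `fix(G) ≤ fix(G/C)`, with equality when `G[C]` has no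
negative edge. -/
theorem stmt14 {V : Type*} [Fintype V] (pos neg : V → V → Prop)
    (hps : Symmetric pos) (hns : Symmetric neg)
    (hpi : ∀ v, ¬ pos v v) (hni : ∀ v, ¬ neg v v)
    (hd : ∀ u v, pos u v → ¬ neg u v)
    (C : Set V)
    (hC : ∃ w ∈ C, ∀ v, v ∈ C ↔ Relation.ReflTransGen pos w v)
    (hnt : ∃ u ∈ C, ∃ v ∈ C, u ≠ v) :
    fixc pos neg ≤ fixc (cpos pos C) (cneg pos neg C) ∧
    ((∀ u ∈ C, ∀ v ∈ C, ¬ neg u v) →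
      fixc pos neg = fixc (cpos pos C) (cneg pos neg C)) :=
  stmt14_general pos neg hps hns C hC hnt
end

section
/- Let G be a graph, U a nonempty set of its vertices, and let G̃ be obtained from G by adding four new vertices a, b, c, d with edges ab, bc, cd, da, plus an edge av for every v ∈ U. Then the number of maximal independent sets of G̃ satisfies mis(G̃) ≤ 2·mis(G) + mis(G − U), with equality if and only if G has no maximal independent set disjoint from U. -/
/-- `S` is a maximal independent set. -/
def IsMaxIndep {V : Type*} (adj : V → V → Prop) (S : Set V) : Prop :=
  (∀ u ∈ S, ∀ v ∈ S, ¬ adj u v) ∧ ∀ v, v ∉ S → ∃ u ∈ S, adj u v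

/-- Number of maximal independent sets. -/
noncomputable def misc {V : Type*} (adj : V → V → Prop) : ℕ :=
  Set.ncard {S : Set V | IsMaxIndep adj S}

/-- `S` is a maximal independent set of the subgraph induced on `W`. -/
def IsMaxIndepOn {V : Type*} (adj : V → V → Prop) (W S : Set V) : Prop :=
  S ⊆ W ∧ (∀ u ∈ S, ∀ v ∈ S, ¬ adj u v) ∧ ∀ v ∈ W, v ∉ S → ∃ u ∈ S, adj u v

/-- The graph `G̃`: `G` together with a 4-cycle `a b c d` (`a = Sum.inr 0`,
`b = Sum.inr 1`, `c = Sum.inr 2`, `d = Sum.inr 3`) where `a` is additionally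
adjacent to every vertex of `U`. -/
def tildeG {V : Type*} (G : SimpleGraph V) (U : Set V) : SimpleGraph (V ⊕ Fin 4) where
  Adj a b :=
    match a, b with
    | Sum.inl u, Sum.inl v => G.Adj u v
    | Sum.inl u, Sum.inr i => i = 0 ∧ u ∈ U
    | Sum.inr i, Sum.inl u => i = 0 ∧ u ∈ U
    | Sum.inr i, Sum.inr j => j.val = (i.val + 1) % 4 ∨ i.val = (j.val + 1) % 4
  symm := by
    constructor
    rintro (u | i) (v | j) h
    · exact h.symm
    · exact h
    · exact h
    · exact h.symm
  loopless := by
    constructor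
    rintro (u | i) h
    · exact G.irrefl h
    · rcases h with h | h <;> omega

/-!
A maximal independent set of `G̃` meets the 4-cycle in `{a, c}`, `{b, d}` or `{c}`. In the first
case its trace on `G` is a maximal independent set of `G − U`, in the second any maximal
independent set of `G`, and in the third a maximal independent set of `G` meeting `U` (which is
then needed to dominate `a`). Hence `mis(G̃) = 2·mis(G) + mis(G − U) − k`, where `k` counts the
maximal independent sets of `G` disjoint from `U`.
-/

lemma isMaxIndepOn_compl_iff {V : Type*} {adj : V → V → Prop} {U S : Set V} :
    IsMaxIndepOn adj Uᶜ S ↔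
      (∀ u ∈ S, ∀ v ∈ S, ¬ adj u v) ∧ (∀ v ∉ S, (∃ u ∈ S, adj u v) ∨ v ∈ U) ∧
        ∀ u ∈ S, u ∉ U := by
  simp only [IsMaxIndepOn, Set.subset_def, Set.mem_compl_iff]
  grind

lemma ncard_isMaxIndep_meeting_add_ncard_isMaxIndep_disjoint {V : Type*} [Finite V]
    (adj : V → V → Prop) (U : Set V) :
    {S : Set V | IsMaxIndep adj S ∧ (S ∩ U).Nonempty}.ncard +
        {S : Set V | IsMaxIndep adj S ∧ S ∩ U = ∅}.ncard = misc adj := by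
  rw [misc, ← Set.ncard_union_eq _ (Set.toFinite _) (Set.toFinite _)]
  · congr 1
    ext S
    simp only [Set.mem_union, Set.mem_ofPred_eq, ← Set.not_nonempty_iff_eq_empty]
    tauto
  · rw [Set.disjoint_left]
    rintro S ⟨-, hSU⟩ ⟨-, hSU'⟩
    exact Set.not_nonempty_iff_eq_empty.mpr hSU' hSU

namespace TildeG

variable {V : Type*} {G : SimpleGraph V} {U : Set V}

def cycleAdj (i j : Fin 4) : Prop := j.val = (i.val + 1) % 4 ∨ i.val = (j.val + 1) % 4

instance : DecidableRel cycleAdj := fun _ _ => by unfold cycleAdj; infer_instance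

@[simp] lemma adj_inl_inl {u v : V} :
    (tildeG G U).Adj (Sum.inl u) (Sum.inl v) ↔ G.Adj u v := Iff.rfl

@[simp] lemma adj_inl_inr {u : V} {i : Fin 4} :
    (tildeG G U).Adj (Sum.inl u) (Sum.inr i) ↔ i = 0 ∧ u ∈ U := Iff.rfl

@[simp] lemma adj_inr_inl {u : V} {i : Fin 4} :
    (tildeG G U).Adj (Sum.inr i) (Sum.inl u) ↔ i = 0 ∧ u ∈ U := Iff.rfl

@[simp] lemma adj_inr_inr {i j : Fin 4} :
    (tildeG G U).Adj (Sum.inr i) (Sum.inr j) ↔ cycleAdj i j := Iff.rfl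

/-- `p` says whether `a = 0` is dominated from the `G` side. -/
lemma cycle_classification (C : Set (Fin 4)) (p : Prop) :
    ((∀ i ∈ C, ∀ j ∈ C, ¬ cycleAdj i j) ∧
        ∀ i ∉ C, (∃ j ∈ C, cycleAdj j i) ∨ (i = 0 ∧ p)) ↔
      C = {0, 2} ∨ C = {1, 3} ∨ (C = {2} ∧ p) := by
  obtain ⟨F, rfl⟩ : ∃ F : Finset (Fin 4), ↑F = C := ⟨C.toFinite.toFinset, by simp⟩
  have h02 : ((↑F : Set (Fin 4)) = {0, 2} ↔ F = {0, 2}) := by rw [← Finset.coe_inj]; simp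
  have h13 : ((↑F : Set (Fin 4)) = {1, 3} ↔ F = {1, 3}) := by rw [← Finset.coe_inj]; simp
  have h2 : ((↑F : Set (Fin 4)) = {2} ↔ F = {2}) := by rw [← Finset.coe_inj]; simp
  simp only [Finset.mem_coe, h02, h13, h2]
  clear h02 h13 h2
  by_cases hp : p <;> simp only [hp, and_true, and_false, or_false] <;> revert F <;> decide

def ofParts (S : Set V) (C : Set (Fin 4)) : Set (V ⊕ Fin 4) := Sum.inl '' S ∪ Sum.inr '' C

@[simp] lemma inl_mem_ofParts {S : Set V} {C : Set (Fin 4)} {v : V} :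
    Sum.inl v ∈ ofParts S C ↔ v ∈ S := by simp [ofParts]

@[simp] lemma inr_mem_ofParts {S : Set V} {C : Set (Fin 4)} {i : Fin 4} :
    Sum.inr i ∈ ofParts S C ↔ i ∈ C := by simp [ofParts]

lemma ofParts_preimage (T : Set (V ⊕ Fin 4)) :
    ofParts (Sum.inl ⁻¹' T) (Sum.inr ⁻¹' T) = T := by
  ext (v | i) <;> simp

@[simp] lemma ofParts_inj {S S' : Set V} {C C' : Set (Fin 4)} :
    ofParts S C = ofParts S' C' ↔ S = S' ∧ C = C' := by
  refine ⟨fun h => ⟨?_, ?_⟩, fun ⟨hS, hC⟩ => hS ▸ hC ▸ rfl⟩ <;> ext x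
  · simpa using congrArg (Sum.inl x ∈ ·) h
  · simpa using congrArg (Sum.inr x ∈ ·) h

lemma isMaxIndep_ofParts_iff {S : Set V} {C : Set (Fin 4)} :
    IsMaxIndep (tildeG G U).Adj (ofParts S C) ↔
      ((∀ u ∈ S, ∀ v ∈ S, ¬ G.Adj u v) ∧
        (∀ v ∉ S, (∃ u ∈ S, G.Adj u v) ∨ (0 ∈ C ∧ v ∈ U)) ∧
        (0 ∈ C → ∀ u ∈ S, u ∉ U)) ∧
      (∀ i ∈ C, ∀ j ∈ C, ¬ cycleAdj i j) ∧
        ∀ i ∉ C, (∃ j ∈ C, cycleAdj j i) ∨ (i = 0 ∧ (S ∩ U).Nonempty) := by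
  simp only [IsMaxIndep, Sum.forall, Sum.exists, inl_mem_ofParts, inr_mem_ofParts,
    adj_inl_inl, adj_inl_inr, adj_inr_inl, adj_inr_inr, Set.Nonempty, Set.mem_inter_iff]
  grind

lemma isMaxIndep_ofParts_iff_cases {S : Set V} {C : Set (Fin 4)} :
    IsMaxIndep (tildeG G U).Adj (ofParts S C) ↔
      (C = {0, 2} ∧ IsMaxIndepOn G.Adj Uᶜ S) ∨ (C = {1, 3} ∧ IsMaxIndep G.Adj S) ∨
        (C = {2} ∧ IsMaxIndep G.Adj S ∧ (S ∩ U).Nonempty) := by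
  rw [isMaxIndep_ofParts_iff, cycle_classification, isMaxIndepOn_compl_iff]
  constructor
  · rintro ⟨hS, rfl | rfl | ⟨rfl, hSU⟩⟩ <;> simp_all [IsMaxIndep]
  · rintro (⟨rfl, hS⟩ | ⟨rfl, hS⟩ | ⟨rfl, hS, hSU⟩) <;> simp_all [IsMaxIndep]

lemma setOf_isMaxIndep_eq_union (G : SimpleGraph V) (U : Set V) :
    {T | IsMaxIndep (tildeG G U).Adj T} =
      (ofParts · {0, 2}) '' {S | IsMaxIndepOn G.Adj Uᶜ S} ∪
        (ofParts · {1, 3}) '' {S | IsMaxIndep G.Adj S} ∪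
        (ofParts · {2}) '' {S | IsMaxIndep G.Adj S ∧ (S ∩ U).Nonempty} := by
  ext T
  obtain ⟨S, C, rfl⟩ : ∃ S C, ofParts S C = T := ⟨_, _, ofParts_preimage T⟩
  simp only [Set.mem_ofPred_eq, isMaxIndep_ofParts_iff_cases, Set.mem_union, Set.mem_image,
    ofParts_inj, ← and_assoc, exists_and_right, exists_eq_right, or_assoc]
  simp only [eq_comm (b := C)]
  tauto

lemma disjoint_image_ofParts {C C' : Set (Fin 4)} {i : Fin 4} (hi : i ∈ C) (hi' : i ∉ C')
    (A B : Set (Set V)) : Disjoint ((ofParts · C) '' A) ((ofParts · C') '' B) := by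
  rw [Set.disjoint_left]
  rintro _ ⟨S, -, rfl⟩ ⟨S', -, h⟩
  exact hi' ((ofParts_inj.mp h).2 ▸ hi)

lemma misc_eq [Finite V] (G : SimpleGraph V) (U : Set V) :
    misc (tildeG G U).Adj =
      {S | IsMaxIndepOn G.Adj Uᶜ S}.ncard + misc G.Adj +
        {S | IsMaxIndep G.Adj S ∧ (S ∩ U).Nonempty}.ncard := by
  have hinj (C : Set (Fin 4)) : Function.Injective (ofParts (V := V) · C) :=
    fun S S' h => (ofParts_inj.mp h).1
  rw [misc, setOf_isMaxIndep_eq_union,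
    Set.ncard_union_eq _ (Set.toFinite _) (Set.toFinite _),
    Set.ncard_union_eq (disjoint_image_ofParts (i := 0) (by simp) (by simp) _ _)
      (Set.toFinite _) (Set.toFinite _),
    Set.ncard_image_of_injective _ (hinj _), Set.ncard_image_of_injective _ (hinj _),
    Set.ncard_image_of_injective _ (hinj _), misc]
  exact Set.disjoint_union_left.mpr ⟨disjoint_image_ofParts (i := 0) (by simp) (by simp) _ _,
    disjoint_image_ofParts (i := 1) (by simp) (by simp) _ _⟩

end TildeG

theorem stmt17_general {V : Type*} [Fintype V] (G : SimpleGraph V) (U : Set V) :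
    misc (tildeG G U).Adj ≤
      2 * misc G.Adj + Set.ncard {S : Set V | IsMaxIndepOn G.Adj Uᶜ S} ∧
    (misc (tildeG G U).Adj =
        2 * misc G.Adj + Set.ncard {S : Set V | IsMaxIndepOn G.Adj Uᶜ S} ↔
      ¬ ∃ S : Set V, IsMaxIndep G.Adj S ∧ S ∩ U = ∅) := by
  have hcount := TildeG.misc_eq G U
  have hsplit := ncard_isMaxIndep_meeting_add_ncard_isMaxIndep_disjoint G.Adj U
  have hnone : {S : Set V | IsMaxIndep G.Adj S ∧ S ∩ U = ∅}.ncard = 0 ↔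
      ¬ ∃ S : Set V, IsMaxIndep G.Adj S ∧ S ∩ U = ∅ := by
    rw [Set.ncard_eq_zero (Set.toFinite _), Set.eq_empty_iff_forall_notMem, not_exists]
    rfl
  rw [← hnone]
  omega

/-- `mis(G̃) ≤ 2·mis(G) + mis(G − U)`, with equality iff `G` has no maximal
independent set disjoint from `U`. -/
theorem stmt17 {V : Type*} [Fintype V] (G : SimpleGraph V) (U : Set V)
    (hU : U.Nonempty) :
    misc (tildeG G U).Adj ≤
      2 * misc G.Adj + Set.ncard {S : Set V | IsMaxIndepOn G.Adj Uᶜ S} ∧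
    (misc (tildeG G U).Adj =
        2 * misc G.Adj + Set.ncard {S : Set V | IsMaxIndepOn G.Adj Uᶜ S} ↔
      ¬ ∃ S : Set V, IsMaxIndep G.Adj S ∧ S ∩ U = ∅) :=
  stmt17_general G U
end
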